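/- arXiv:1904.01468 — 9 statements merged into one kernel-verified Lean document; each statement's English description precedes it below -/
import Mathlib

section
/- For every λ > 0 and every x ∈ ℤ^d one has I_x(λ) > 0, where I_x(λ) = (2π)^{−d} ∫_{[−π,π]^d} cos(θ·x)/(λ − φ(θ)) dθ. -/
/-!
Put `M = 1 - a 0` and `b = a + M δ₀` (`lazyKernel a`). Then `b ≥ 0`, `∑ b = M`, and by symmetry
`φ(θ) + M = ∑ b(z) e^{iθ·z}`, so `|φ + M| ≤ M < λ + M`. Expanding
`1 / (λ - φ) = ∑ₙ (φ + M)ⁿ / (λ + M)ⁿ⁺¹` and integrating term by term against `cos (θ·x)`, where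
the Fourier coefficients of `(φ + M)ⁿ` are those of the convolution power `b⁽ⁿ⁾`, gives
`I_x(λ) = ∑ₙ (b⁽ⁿ⁾(x) + b⁽ⁿ⁾(-x)) / (2 (λ + M)ⁿ⁺¹)`, a series of nonnegative terms.
Irreducibility writes `x = z₁ + ⋯ + z_k` with every `b zᵢ > 0`, so `b⁽ᵏ⁾(x) ≥ ∏ b zᵢ > 0`.
-/

open MeasureTheory ENNReal

namespace LatticeGreen

section Convolution

variable {G : Type*} [AddCommGroup G] {f g : G → ℝ}

noncomputable def conv (f g : G → ℝ) (z : G) : ℝ := ∑' w, f (z - w) * g w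

def addShear : G × G ≃ G × G where
  toFun p := (p.1 + p.2, p.2)
  invFun q := (q.1 - q.2, q.2)
  left_inv p := by simp
  right_inv q := by simp

theorem summable_conv_kernel (hf : Summable f) (hg : Summable g) :
    Summable fun q : G × G => f (q.1 - q.2) * g q.2 :=
  (addShear.symm.summable_iff (f := fun p : G × G => f p.1 * g p.2)).mpr
    (summable_mul_of_summable_norm hf.norm hg.norm)

theorem summable_conv (hf : Summable f) (hg : Summable g) : Summable (conv f g) :=
  (summable_conv_kernel hf hg).prod

theorem conv_nonneg (hf : 0 ≤ f) (hg : 0 ≤ g) : 0 ≤ conv f g := fun _ =>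
  tsum_nonneg fun _ => mul_nonneg (hf _) (hg _)

theorem mul_le_conv_add (hf : Summable f) (hg : Summable g) (hf0 : 0 ≤ f) (hg0 : 0 ≤ g)
    (z w : G) : f z * g w ≤ conv f g (z + w) := by
  have h := ((summable_conv_kernel hf hg).prod_factor (z + w)).le_tsum w
    fun _ _ => mul_nonneg (hf0 _) (hg0 _)
  rwa [add_sub_cancel_right] at h

variable {χ : AddChar G ℂ}

theorem norm_ofReal_mul_addChar (hχ : ∀ z, ‖χ z‖ = 1) (r : ℝ) (z : G) :
    ‖(r : ℂ) * χ z‖ = ‖r‖ := by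
  rw [norm_mul, hχ, mul_one, Complex.norm_real]

theorem summable_norm_ofReal_mul_addChar (hχ : ∀ z, ‖χ z‖ = 1) (hf : Summable f) :
    Summable fun z => ‖(f z : ℂ) * χ z‖ :=
  hf.norm.congr fun z => (norm_ofReal_mul_addChar hχ _ z).symm

theorem norm_tsum_ofReal_mul_addChar_le (hχ : ∀ z, ‖χ z‖ = 1) (hf : Summable f) :
    ‖∑' z, (f z : ℂ) * χ z‖ ≤ ∑' z, ‖f z‖ := by
  simpa only [norm_ofReal_mul_addChar hχ] using
    norm_tsum_le_tsum_norm (summable_norm_ofReal_mul_addChar hχ hf)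

theorem tsum_mul_tsum_addChar (hχ : ∀ z, ‖χ z‖ = 1) (hf : Summable f) (hg : Summable g) :
    (∑' z, (f z : ℂ) * χ z) * (∑' z, (g z : ℂ) * χ z) = ∑' z, (conv f g z : ℂ) * χ z := by
  have hkernel : Summable fun q : G × G => ((f (q.1 - q.2) * g q.2 : ℝ) : ℂ) * χ q.1 :=
    .of_norm ((summable_conv_kernel hf hg).norm.congr fun q =>
      (norm_ofReal_mul_addChar hχ _ q.1).symm)
  calc _ = ∑' q : G × G, ((f (q.1 - q.2) * g q.2 : ℝ) : ℂ) * χ q.1 := by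
        rw [tsum_mul_tsum_of_summable_norm (summable_norm_ofReal_mul_addChar hχ hf)
          (summable_norm_ofReal_mul_addChar hχ hg), ← addShear.symm.tsum_eq]
        refine tsum_congr fun q => ?_
        rw [← sub_add_cancel q.1 q.2, AddChar.map_add_eq_mul]
        simp only [addShear, Equiv.coe_fn_symm_mk, add_sub_cancel_right]
        push_cast
        ring
    _ = _ := by
        rw [hkernel.tsum_prod' hkernel.prod_factor]
        simp only [conv, Complex.ofReal_tsum, tsum_mul_right]

variable [DecidableEq G] {b : G → ℝ}

noncomputable def convPow (b : G → ℝ) : ℕ → G → ℝ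
  | 0 => Pi.single 0 1
  | n + 1 => conv (convPow b n) b

theorem summable_convPow (hb : Summable b) : ∀ n, Summable (convPow b n)
  | 0 => (hasSum_pi_single 0 1).summable
  | n + 1 => summable_conv (summable_convPow hb n) hb

theorem convPow_nonneg (hb0 : 0 ≤ b) : ∀ n, 0 ≤ convPow b n
  | 0 => Pi.single_nonneg.2 zero_le_one
  | n + 1 => conv_nonneg (convPow_nonneg hb0 n) hb0

theorem prod_le_convPow_sum (hb : Summable b) (hb0 : 0 ≤ b) :
    ∀ {k : ℕ} (zs : Fin k → G), ∏ i, b (zs i) ≤ convPow b k (∑ i, zs i)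
  | 0, _ => by simp [convPow, Fin.sum_univ_zero]
  | k + 1, zs => by
    rw [Fin.prod_univ_castSucc, Fin.sum_univ_castSucc]
    exact (mul_le_mul_of_nonneg_right (prod_le_convPow_sum hb hb0 _) (hb0 _)).trans
      (mul_le_conv_add (summable_convPow hb k) hb (convPow_nonneg hb0 k) hb0 _ _)

theorem tsum_mul_addChar_pow (hχ : ∀ z, ‖χ z‖ = 1) (hb : Summable b) :
    ∀ n, (∑' z, (b z : ℂ) * χ z) ^ n = ∑' z, (convPow b n z : ℂ) * χ z
  | 0 => by
    rw [pow_zero, tsum_eq_single 0 fun z hz => by simp [convPow, hz]]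
    simp [convPow]
  | n + 1 => by
    rw [pow_succ, tsum_mul_addChar_pow hχ hb n,
      tsum_mul_tsum_addChar hχ (summable_convPow hb n) hb, convPow]

end Convolution

theorem hasSum_pow_div_pow_succ {x y : ℝ} (hxy : |y| < x) :
    HasSum (fun n : ℕ => y ^ n / x ^ (n + 1)) (1 / (x - y)) := by
  have hx : 0 < x := (abs_nonneg y).trans_lt hxy
  have hr : |y / x| < 1 := by rwa [abs_div, abs_of_pos hx, div_lt_one hx]
  have hxy' : x - y ≠ 0 := (sub_pos.2 ((le_abs_self y).trans_lt hxy)).ne'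
  have h := (hasSum_geometric_of_abs_lt_one hr).div_const x
  rw [show (1 - y / x)⁻¹ / x = 1 / (x - y) by field_simp] at h
  simpa only [div_pow, pow_succ, div_div] using h

theorem hasSum_integral_div_sub {α : Type*} [MeasurableSpace α] {μ : Measure α} {f g : α → ℝ}
    {c M : ℝ} (hf : Integrable f μ) (hg : AEStronglyMeasurable g μ) (hM : 0 ≤ M)
    (hgM : ∀ t, |g t| ≤ M) (hMc : M < c) :
    HasSum (fun n : ℕ => (∫ t, f t * g t ^ n ∂μ) / c ^ (n + 1)) (∫ t, f t / (c - g t) ∂μ) := by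
  have hc : 0 < c := hM.trans_lt hMc
  have hpow : ∀ (n : ℕ) t, |g t ^ n| ≤ M ^ n := fun n t => by
    rw [abs_pow]; exact pow_le_pow_left₀ (abs_nonneg _) (hgM t) n
  have hint : ∀ n : ℕ, Integrable (fun t => f t * g t ^ n / c ^ (n + 1)) μ := fun n =>
    (hf.mul_bdd (hg.pow n) (.of_forall (hpow n))).div_const _
  have hbound : ∀ n : ℕ,
      ∫ t, ‖f t * g t ^ n / c ^ (n + 1)‖ ∂μ ≤ (∫ t, ‖f t‖ ∂μ) / c * (M / c) ^ n := by
    intro n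
    rw [div_mul_eq_mul_div, ← integral_mul_const, ← integral_div]
    refine integral_mono (hint n).norm ((hf.norm.mul_const _).div_const _) fun t => ?_
    rw [norm_div, norm_mul, Real.norm_eq_abs (_ ^ _), Real.norm_eq_abs (_ ^ _),
      abs_of_pos (pow_pos hc _), div_pow, pow_succ, mul_div_assoc', div_div]
    gcongr
    exact hpow n t
  have hsummable : Summable fun n : ℕ => ∫ t, ‖f t * g t ^ n / c ^ (n + 1)‖ ∂μ :=
    .of_nonneg_of_le (fun n => integral_nonneg fun t => norm_nonneg _) hbound
      ((summable_geometric_of_lt_one (div_nonneg hM hc.le) ((div_lt_one hc).2 hMc)).mul_left _)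
  have hexpand : ∀ t, f t / (c - g t) = ∑' n : ℕ, f t * g t ^ n / c ^ (n + 1) := fun t => by
    simp_rw [div_eq_mul_one_div (f t), mul_div_assoc,
      ((hasSum_pow_div_pow_succ ((hgM t).trans_lt hMc)).mul_left (f t)).tsum_eq]
  simp_rw [hexpand, ← integral_div]
  exact hasSum_integral_of_summable_integral_norm hint hsummable

section Torus
open Real

theorem integral_Icc_exp_int_mul_I (n : ℤ) :
    ∫ t in Set.Icc (-π) π, Complex.exp (↑(t * n) * Complex.I) =
      if n = 0 then (2 * π : ℂ) else 0 := by
  rw [integral_Icc_eq_integral_Ioc, ← intervalIntegral.integral_of_le (by linarith [pi_pos])]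
  split_ifs with hn
  · simp only [hn, Int.cast_zero, mul_zero, Complex.ofReal_zero, zero_mul, Complex.exp_zero,
      intervalIntegral.integral_const, sub_neg_eq_add, Complex.real_smul, Complex.ofReal_add,
      mul_one]
    ring
  · have hlin : ∀ t : ℝ, (↑(t * n) : ℂ) * Complex.I = n * Complex.I * t := fun t => by
      push_cast; ring
    have hperiodic : Complex.exp (n * Complex.I * π) = Complex.exp (n * Complex.I * (-π : ℝ)) := by
      rw [← Complex.exp_periodic.int_mul n (n * Complex.I * (-π : ℝ))]
      congr 1
      push_cast
      ring
    simp_rw [hlin]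
    rw [integral_exp_mul_complex (by simp [hn]), hperiodic, sub_self, zero_div]

variable {d : ℕ}

noncomputable def phase (θ : Fin d → ℝ) : AddChar (Fin d → ℤ) ℂ where
  toFun z := Complex.exp (↑(∑ i, θ i * z i) * Complex.I)
  map_zero_eq_one' := by simp
  map_add_eq_mul' z w := by
    simp only [← Complex.exp_add, ← add_mul, ← Complex.ofReal_add, ← Finset.sum_add_distrib,
      Pi.add_apply, Int.cast_add, mul_add]

theorem phase_apply (θ : Fin d → ℝ) (z : Fin d → ℤ) :
    phase θ z = Complex.exp (↑(∑ i, θ i * z i) * Complex.I) := rfl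

theorem norm_phase (θ : Fin d → ℝ) (z : Fin d → ℤ) : ‖phase θ z‖ = 1 :=
  Complex.norm_exp_ofReal_mul_I _

theorem continuous_phase (z : Fin d → ℤ) : Continuous fun θ : Fin d → ℝ => phase θ z := by
  simp only [phase_apply]
  fun_prop

theorem ofReal_cos_eq_phase (θ : Fin d → ℝ) (x : Fin d → ℤ) :
    (Real.cos (∑ i, θ i * x i) : ℂ) = (phase θ x + phase θ (-x)) / 2 := by
  rw [Complex.ofReal_cos, Complex.cos, phase_apply, phase_apply]
  push_cast
  simp only [Pi.neg_apply, Int.cast_neg, mul_neg, Finset.sum_neg_distrib, neg_mul]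

abbrev cube (d : ℕ) : Set (Fin d → ℝ) := Set.Icc (fun _ => -π) (fun _ => π)

theorem measureReal_cube : volume.real (cube d) = (2 * π) ^ d := by
  rw [measureReal_def, Real.volume_Icc_pi, Finset.prod_const, Finset.card_univ, Fintype.card_fin,
    ENNReal.toReal_pow, ENNReal.toReal_ofReal (by linarith [pi_pos])]
  ring

theorem integral_cube_phase (y : Fin d → ℤ) :
    ∫ θ in cube d, phase θ y = if y = 0 then ((2 * π) ^ d : ℂ) else 0 := by
  have hprod : ∀ θ : Fin d → ℝ, phase θ y = ∏ i, Complex.exp (↑(θ i * y i) * Complex.I) := by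
    intro θ
    rw [phase_apply, ← Complex.exp_sum, ← Finset.sum_mul, Complex.ofReal_sum]
  simp_rw [hprod]
  rw [cube, ← Set.pi_univ_Icc, volume_pi, Measure.restrict_pi_pi,
    integral_fintype_prod_eq_prod (fun i (t : ℝ) => Complex.exp (↑(t * y i) * Complex.I))]
  simp_rw [integral_Icc_exp_int_mul_I]
  split_ifs with hy
  · simp [hy]
  · obtain ⟨i, hi⟩ := Function.ne_iff.1 hy
    exact Finset.prod_eq_zero (Finset.mem_univ i) (if_neg hi)

theorem integral_cube_phase_mul_tsum {c : (Fin d → ℤ) → ℝ} (hc : Summable c) (y : Fin d → ℤ) :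
    ∫ θ in cube d, phase θ y * ∑' z, (c z : ℂ) * phase θ z = (2 * π) ^ d * c (-y) := by
  have hterm : ∀ z θ, phase θ y * ((c z : ℂ) * phase θ z) = c z * phase θ (y + z) := by
    intro z θ
    rw [AddChar.map_add_eq_mul]
    ring
  have hint : ∀ z, Integrable (fun θ => (c z : ℂ) * phase θ (y + z)) (volume.restrict (cube d)) :=
    fun z => (continuous_const.mul (continuous_phase _)).integrableOn_Icc
  have hnorm : ∀ z, ∫ θ in cube d, ‖(c z : ℂ) * phase θ (y + z)‖ = (2 * π) ^ d * ‖c z‖ := by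
    intro z
    simp only [norm_mul, norm_phase, Complex.norm_real, mul_one, integral_const, smul_eq_mul,
      measureReal_restrict_apply_univ, measureReal_cube, mul_comm]
  simp_rw [← tsum_mul_left, hterm]
  rw [← integral_tsum_of_summable_integral_norm hint
    ((hc.norm.mul_left _).congr fun z => (hnorm z).symm)]
  simp_rw [integral_const_mul, integral_cube_phase, add_eq_zero_iff_eq_neg', mul_ite, mul_zero]
  rw [tsum_ite_eq]
  ring

theorem continuous_tsum_ofReal_mul_phase {c : (Fin d → ℤ) → ℝ} (hc : Summable c) :
    Continuous fun θ : Fin d → ℝ => ∑' z, (c z : ℂ) * phase θ z :=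
  continuous_tsum (fun z => continuous_const.mul (continuous_phase z)) hc.norm
    fun z θ => (norm_ofReal_mul_addChar (norm_phase θ) _ z).le

theorem tsum_ofReal_mul_phase_of_even {c : (Fin d → ℤ) → ℝ} (hc : Summable c)
    (hc_even : c.Even) (θ : Fin d → ℝ) :
    ∑' z, (c z : ℂ) * phase θ z = ↑(∑' z, c z * Real.cos (∑ i, θ i * z i)) := by
  have hs : Summable fun z => (c z : ℂ) * phase θ z :=
    (summable_norm_ofReal_mul_addChar (norm_phase θ) hc).of_norm
  have hneg : ∑' z, (c z : ℂ) * phase θ (-z) = ∑' z, (c z : ℂ) * phase θ z := by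
    rw [← (Equiv.neg _).tsum_eq]
    simp only [Equiv.neg_apply, neg_neg, hc_even _]
  have hs' : Summable fun z => (c z : ℂ) * phase θ (-z) := by
    simpa only [Function.comp_def, Equiv.neg_apply, neg_neg, hc_even _] using
      (Equiv.neg (Fin d → ℤ)).summable_iff.2 hs
  rw [Complex.ofReal_tsum]
  simp_rw [Complex.ofReal_mul, ofReal_cos_eq_phase, mul_div_assoc', mul_add]
  rw [tsum_div_const, hs.tsum_add hs', hneg]
  ring

theorem integral_cube_cos_mul_tsum {c : (Fin d → ℤ) → ℝ} (hc : Summable c) (x : Fin d → ℤ) :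
    ∫ θ in cube d, (Real.cos (∑ i, θ i * x i) : ℂ) * ∑' z, (c z : ℂ) * phase θ z
      = (2 * π) ^ d * ((c x + c (-x)) / 2) := by
  have hint : ∀ y, Integrable (fun θ => phase θ y * ∑' z, (c z : ℂ) * phase θ z)
      (volume.restrict (cube d)) := fun y =>
    ((continuous_phase y).mul (continuous_tsum_ofReal_mul_phase hc)).integrableOn_Icc
  simp_rw [ofReal_cos_eq_phase, div_mul_eq_mul_div, add_mul]
  rw [integral_div, integral_add (hint x) (hint (-x)), integral_cube_phase_mul_tsum hc,
    integral_cube_phase_mul_tsum hc, neg_neg]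
  ring

theorem integral_cube_cos_mul_pow {b : (Fin d → ℤ) → ℝ} (hb : Summable b)
    {g : (Fin d → ℝ) → ℝ} (hg : ∀ θ, (g θ : ℂ) = ∑' z, (b z : ℂ) * phase θ z)
    (x : Fin d → ℤ) (n : ℕ) :
    ∫ θ in cube d, Real.cos (∑ i, θ i * x i) * g θ ^ n
      = (2 * π) ^ d * ((convPow b n x + convPow b n (-x)) / 2) := by
  have h := integral_cube_cos_mul_tsum (summable_convPow hb n) x
  simp_rw [← tsum_mul_addChar_pow (norm_phase _) hb n, ← hg] at h
  exact_mod_cast h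

theorem integral_cube_cos_div_sub_pos {b : (Fin d → ℤ) → ℝ} (hb : Summable b) (hb0 : 0 ≤ b)
    {g : (Fin d → ℝ) → ℝ} (hg : ∀ θ, (g θ : ℂ) = ∑' z, (b z : ℂ) * phase θ z)
    {c : ℝ} (hc : ∑' z, b z < c) (x : Fin d → ℤ) {k : ℕ} (hk : 0 < convPow b k x) :
    0 < ∫ θ in cube d, Real.cos (∑ i, θ i * x i) / (c - g θ) := by
  have hg_le : ∀ θ, |g θ| ≤ ∑' z, b z := fun θ => by
    rw [← Real.norm_eq_abs, ← Complex.norm_real, hg]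
    refine (norm_tsum_ofReal_mul_addChar_le (norm_phase θ) hb).trans_eq ?_
    simp_rw [Real.norm_of_nonneg (hb0 _)]
  have hg_cont : Continuous g := by
    simpa only [Function.comp_def, ← hg, Complex.ofReal_re] using
      Complex.continuous_re.comp (continuous_tsum_ofReal_mul_phase hb)
  have hseries := hasSum_integral_div_sub (μ := volume.restrict (cube d))
    ((by fun_prop : Continuous fun θ : Fin d → ℝ => Real.cos (∑ i, θ i * x i)).integrableOn_Icc)
    hg_cont.aestronglyMeasurable (tsum_nonneg hb0) hg_le hc
  simp_rw [integral_cube_cos_mul_pow hb hg x] at hseries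
  have hc0 : 0 < c := (tsum_nonneg hb0).trans_lt hc
  refine hasSum_lt (f := 0) (i := k) (fun n => ?_) ?_ hasSum_zero hseries
  · have : 0 ≤ convPow b n x := convPow_nonneg hb0 n x
    have : 0 ≤ convPow b n (-x) := convPow_nonneg hb0 n (-x)
    dsimp only [Pi.zero_apply]
    positivity
  · have : 0 ≤ convPow b k (-x) := convPow_nonneg hb0 k (-x)
    dsimp only [Pi.zero_apply]
    positivity

end Torus

section LazyKernel

variable {G : Type*} [AddCommGroup G] [DecidableEq G] {a : G → ℝ}

noncomputable def lazyKernel (a : G → ℝ) : G → ℝ := a + Pi.single 0 (1 - a 0)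

theorem summable_lazyKernel (ha : Summable a) : Summable (lazyKernel a) :=
  ha.add (hasSum_pi_single _ _).summable

theorem tsum_lazyKernel (ha : Summable a) :
    ∑' z, lazyKernel a z = ∑' z, a z + (1 - a 0) := by
  simp only [lazyKernel, Pi.add_apply]
  rw [ha.tsum_add (hasSum_pi_single _ _).summable, tsum_pi_single]

theorem lazyKernel_zero : lazyKernel a 0 = 1 := by
  simp [lazyKernel]

theorem lazyKernel_of_ne_zero {z : G} (hz : z ≠ 0) : lazyKernel a z = a z := by
  simp [lazyKernel, hz]

theorem lazyKernel_nonneg (hnonneg : ∀ z, z ≠ 0 → 0 ≤ a z) : 0 ≤ lazyKernel a := fun z => by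
  rcases eq_or_ne z 0 with rfl | hz
  · rw [lazyKernel_zero]; exact zero_le_one
  · rw [lazyKernel_of_ne_zero hz]; exact hnonneg z hz

theorem lazyKernel_pos (hnonneg : ∀ z, z ≠ 0 → 0 ≤ a z) {z : G} (haz : a z ≠ 0) :
    0 < lazyKernel a z := by
  rcases eq_or_ne z 0 with rfl | hz
  · rw [lazyKernel_zero]; exact zero_lt_one
  · rw [lazyKernel_of_ne_zero hz]; exact (hnonneg z hz).lt_of_ne' haz

theorem tsum_lazyKernel_mul_addChar {χ : AddChar G ℂ} (hχ : ∀ z, ‖χ z‖ = 1) (ha : Summable a) :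
    ∑' z, (lazyKernel a z : ℂ) * χ z = ∑' z, (a z : ℂ) * χ z + (1 - a 0 : ℝ) := by
  have hsingle : ∑' z, ((Pi.single (0 : G) (1 - a 0) : G → ℝ) z : ℂ) * χ z = (1 - a 0 : ℝ) := by
    rw [tsum_eq_single 0 fun z hz => by simp [hz]]
    simp
  simp only [lazyKernel, Pi.add_apply, Complex.ofReal_add, add_mul]
  rw [(summable_norm_ofReal_mul_addChar hχ ha).of_norm.tsum_add, hsingle]
  exact (summable_norm_ofReal_mul_addChar hχ (hasSum_pi_single _ _).summable).of_norm

end LazyKernel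

end LatticeGreen

open LatticeGreen

theorem Ix_pos_general (d : ℕ) (a : (Fin d → ℤ) → ℝ)
    (hsymm : ∀ z, a z = a (-z))
    (hnonneg : ∀ z, z ≠ 0 → 0 ≤ a z)
    (hsum : Summable fun z => |a z|)
    (htot : ∑' z, a z = 0)
    (hirr : ∀ z : Fin d → ℤ, ∃ (k : ℕ) (zs : Fin k → Fin d → ℤ),
      z = ∑ i, zs i ∧ ∀ i, a (zs i) ≠ 0)
    (phi : (Fin d → ℝ) → ℝ)
    (hphi : ∀ θ, phi θ = ∑' z : Fin d → ℤ, a z * Real.cos (∑ i, θ i * (z i : ℝ)))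
    (I : ℝ → (Fin d → ℤ) → ℝ)
    (hI : ∀ (lam : ℝ) (x : Fin d → ℤ), I lam x = ((2 * Real.pi) ^ d)⁻¹ *
      ∫ θ in Set.Icc (fun _ : Fin d => -Real.pi) (fun _ : Fin d => Real.pi),
        Real.cos (∑ i, θ i * (x i : ℝ)) / (lam - phi θ)) :
    ∀ (lam : ℝ), 0 < lam → ∀ x : Fin d → ℤ, 0 < I lam x := by
  intro lam hlam x
  set b := lazyKernel a
  have hb : Summable b := summable_lazyKernel hsum.of_abs
  have hb0 : 0 ≤ b := lazyKernel_nonneg hnonneg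
  have hphi_b : ∀ θ, ((phi θ + (1 - a 0) : ℝ) : ℂ) = ∑' z, (b z : ℂ) * phase θ z := fun θ => by
    rw [tsum_lazyKernel_mul_addChar (norm_phase θ) hsum.of_abs,
      tsum_ofReal_mul_phase_of_even hsum.of_abs (fun z => (hsymm z).symm), hphi, Complex.ofReal_add]
  obtain ⟨k, zs, hx, hzs⟩ := hirr x
  have hk : 0 < convPow b k x := by
    rw [hx]
    exact (Finset.prod_pos fun i _ => lazyKernel_pos hnonneg (hzs i)).trans_le
      (prod_le_convPow_sum hb hb0 zs)
  have hpos := integral_cube_cos_div_sub_pos hb hb0 hphi_b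
    (c := lam + (1 - a 0)) (by rw [tsum_lazyKernel hsum.of_abs, htot]; linarith) x hk
  simp_rw [add_sub_add_right_eq_sub] at hpos
  rw [hI]
  exact mul_pos (by positivity) hpos

/-- For every `λ > 0` and every `x ∈ ℤ^d`, the Green-function integral `I_x(λ)` is
strictly positive. -/
theorem Ix_pos (d : ℕ) (hd : 1 ≤ d) (a : (Fin d → ℤ) → ℝ)
    (hsymm : ∀ z, a z = a (-z))
    (hnonneg : ∀ z, z ≠ 0 → 0 ≤ a z)
    (hneg : a 0 < 0)
    (hsum : Summable fun z => |a z|)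
    (htot : ∑' z, a z = 0)
    (hirr : ∀ z : Fin d → ℤ, ∃ (k : ℕ) (zs : Fin k → Fin d → ℤ),
      z = ∑ i, zs i ∧ ∀ i, a (zs i) ≠ 0)
    (phi : (Fin d → ℝ) → ℝ)
    (hphi : ∀ θ, phi θ = ∑' z : Fin d → ℤ, a z * Real.cos (∑ i, θ i * (z i : ℝ)))
    (I : ℝ → (Fin d → ℤ) → ℝ)
    (hI : ∀ (lam : ℝ) (x : Fin d → ℤ), I lam x = ((2 * Real.pi) ^ d)⁻¹ *
      ∫ θ in Set.Icc (fun _ : Fin d => -Real.pi) (fun _ : Fin d => Real.pi),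
        Real.cos (∑ i, θ i * (x i : ℝ)) / (lam - phi θ)) :
    ∀ (lam : ℝ), 0 < lam → ∀ x : Fin d → ℤ, 0 < I lam x :=
  Ix_pos_general d a hsymm hnonneg hsum htot hirr phi hphi I hI
end

section
/- A number λ > 0 is an eigenvalue of the operator H on ℓ²(ℤ^d) (i.e. there exists a non-zero f ∈ ℓ²(ℤ^d) with H f = λ f) if and only if the system of N linear equations v_i = ∑_{j=1}^N β_j · v_j · I_{x_j − x_i}(λ), i = 1, …, N, has a non-trivial solution (v_1, …, v_N) ∈ ℝ^N. -/
open MeasureTheory ENNReal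

/-!
The resolvent kernel `I(λ)` is the Fourier cosine transform of `1 / (λ - φ)` with respect to the
normalized measure on `[-π, π]^d`. Since `φ ≤ 0`, this function is continuous and bounded by
`1 / λ`, so `I(λ) ∈ ℓ²` by Bessel's inequality for the exponentials `e^{iθ·x}`. Convolution with
`a` becomes multiplication by `φ` on the Fourier side, hence `(λ - A) I(λ) = δ₀`.

A bounded solution of `A u = λ u` with `λ > 0` vanishes (a maximum principle: `a` is nonnegative
off the diagonal with total sum zero). So an eigenfunction `f` coincides with
`∑ⱼ βⱼ f(xⱼ) I(λ)(· - xⱼ)`, both solving `(λ - A) g = ∑ⱼ βⱼ f(xⱼ) δ_{xⱼ}`; evaluating at the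
`xᵢ` gives the linear system for `vᵢ = f(xᵢ)`. Conversely a solution `v` of the system turns
`∑ⱼ βⱼ vⱼ I(λ)(· - xⱼ)` into an eigenfunction.
-/

noncomputable section

namespace PointPerturbation

open Real ProbabilityTheory ComplexConjugate

section Convolution

lemma summable_mul_of_abs_le {α : Type*} {a u : α → ℝ} (hsum : Summable fun z => |a z|) {B : ℝ}
    (hu : ∀ z, |u z| ≤ B) : Summable fun z => a z * u z :=
  Summable.of_norm_bounded (hsum.mul_right B) fun z => by
    rw [Real.norm_eq_abs, abs_mul]
    exact mul_le_mul_of_nonneg_left (hu z) (abs_nonneg _)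

variable {Γ : Type*} [AddCommGroup Γ] {a : Γ → ℝ}

def convolve (a u : Γ → ℝ) (x : Γ) : ℝ := ∑' y, a (x - y) * u y

lemma convolve_eq_tsum (u : Γ → ℝ) (x : Γ) : convolve a u x = ∑' z, a z * u (x - z) := by
  rw [convolve, ← (Equiv.subLeft x).tsum_eq]
  simp

lemma summable_convolve (hsum : Summable fun z => |a z|) {u : Γ → ℝ} {B : ℝ}
    (hu : ∀ z, |u z| ≤ B) (x : Γ) : Summable fun y => a (x - y) * u y :=
  summable_mul_of_abs_le ((Equiv.subLeft x).summable_iff.2 hsum) hu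

lemma convolve_sub (hsum : Summable fun z => |a z|) {u v : Γ → ℝ} {B C : ℝ}
    (hu : ∀ z, |u z| ≤ B) (hv : ∀ z, |v z| ≤ C) (x : Γ) :
    convolve a (u - v) x = convolve a u x - convolve a v x := by
  simp only [convolve, Pi.sub_apply, mul_sub]
  exact (summable_convolve hsum hu x).tsum_sub (summable_convolve hsum hv x)

lemma convolve_comp_sub_right (G : Γ → ℝ) (x y : Γ) :
    convolve a (fun x => G (x - y)) x = convolve a G (x - y) := by
  simp only [convolve_eq_tsum, sub_right_comm]

lemma convolve_finset_sum {ι : Type*} (s : Finset ι) (hsum : Summable fun z => |a z|)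
    {K : ι → Γ → ℝ} {B : ℝ} (hK : ∀ j z, |K j z| ≤ B) (w : ι → ℝ) (x : Γ) :
    convolve a (fun y => ∑ j ∈ s, w j * K j y) x = ∑ j ∈ s, w j * convolve a (K j) x := by
  simp only [convolve, Finset.mul_sum, ← tsum_mul_left]
  rw [← Summable.tsum_finsetSum fun j _ => (summable_convolve hsum (hK j) x).mul_left (w j)]
  exact tsum_congr fun y => Finset.sum_congr rfl fun j _ => by ring

theorem eq_zero_of_convolve_eq_mul (hnonneg : ∀ z, z ≠ 0 → 0 ≤ a z)
    (hsum : Summable fun z => |a z|) (htot : ∑' z, a z = 0) {lam : ℝ} (hlam : 0 < lam)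
    {u : Γ → ℝ} {B : ℝ} (hu : ∀ x, |u x| ≤ B) (h : ∀ x, convolve a u x = lam * u x) :
    u = 0 := by
  classical
  set b : Γ → ℝ := fun z => if z = 0 then 0 else a z
  have hb : ∀ z, 0 ≤ b z := fun z => by
    by_cases hz : z = 0
    · simp [b, hz]
    · simpa [b, hz] using hnonneg z hz
  have htail : ∑' z, b z = -a 0 := by
    have := (summable_abs_iff.1 hsum).tsum_eq_add_tsum_ite 0
    linarith
  have hlam' : 0 < lam - a 0 := by
    linarith [htail ▸ tsum_nonneg hb]
  have hbdd : BddAbove (Set.range fun x => |u x|) := ⟨B, by rintro _ ⟨x, rfl⟩; exact hu x⟩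
  set M := ⨆ x, |u x|
  have hM : ∀ x, |u x| ≤ M := le_ciSup hbdd
  have hbabs : Summable fun z => |b z| :=
    hsum.of_nonneg_of_le (fun _ => abs_nonneg _) fun z => by
      by_cases hz : z = 0 <;> simp [b, hz]
  have hbM : Summable fun z => b z * M := (summable_abs_iff.1 hbabs).mul_right M
  -- With `a = a 0 • δ₀ + b`, the equation gives `(λ - a 0) |u x| ≤ (∑ b) sup |u| = -a 0 sup |u|`.
  have hdiag : ∀ x, (lam - a 0) * |u x| ≤ -a 0 * M := fun x => by
    have hsplit := (summable_mul_of_abs_le hsum fun z => hu (x - z)).tsum_eq_add_tsum_ite 0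
    rw [← convolve_eq_tsum, h x, sub_zero] at hsplit
    have hbu : Summable fun z => b z * u (x - z) :=
      summable_mul_of_abs_le hbabs fun z => hu (x - z)
    calc (lam - a 0) * |u x| = |∑' z, b z * u (x - z)| := by
          rw [← abs_of_pos hlam', ← abs_mul, sub_mul, hsplit, add_sub_cancel_left]
          exact congrArg _ (tsum_congr fun z => by by_cases hz : z = 0 <;> simp [b, hz])
      _ ≤ ∑' z, |b z * u (x - z)| := norm_tsum_le_tsum_norm hbu.norm
      _ ≤ ∑' z, b z * M := by
          refine hbu.abs.tsum_le_tsum (fun z => ?_) hbM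
          rw [abs_mul, abs_of_nonneg (hb z)]
          exact mul_le_mul_of_nonneg_left (hM _) (hb z)
      _ = -a 0 * M := by rw [tsum_mul_right, htail]
  have hM0 : M ≤ 0 := by
    have : (lam - a 0) * M ≤ -a 0 * M := by
      rw [mul_comm, ← le_div_iff₀ hlam']
      exact ciSup_le fun x => by rw [le_div_iff₀ hlam', mul_comm]; exact hdiag x
    nlinarith
  funext x
  exact abs_nonpos_iff.1 ((hM x).trans hM0)

end Convolution

local notation "ℓ²(" Γ ")" => lp (fun _ : Γ => ℝ) 2

lemma _root_.Memℓp.comp_equiv {α β : Type*} {f : α → ℝ} {p : ℝ≥0∞} (hp : 0 < p.toReal)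
    (hf : Memℓp f p) (e : β ≃ α) : Memℓp (f ∘ e) p :=
  (memℓp_gen_iff hp).2 (e.summable_iff.2 ((memℓp_gen_iff hp).1 hf))

section Eigenvalue

variable {Γ ι : Type*} [AddCommGroup Γ] [Fintype ι] {a G : Γ → ℝ} {lam : ℝ}

def pointSource [DecidableEq Γ] (X : ι → Γ) (w : ι → ℝ) (x : Γ) : ℝ :=
  ∑ j, if x = X j then w j else 0

def superpose (G : Γ → ℝ) (X : ι → Γ) (w : ι → ℝ) (x : Γ) : ℝ := ∑ j, w j * G (x - X j)

lemma memℓp_superpose (hG : Memℓp G 2) (X : ι → Γ) (w : ι → ℝ) :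
    Memℓp (superpose G X w) 2 :=
  Memℓp.finsetSum _ fun j _ =>
    (hG.comp_equiv (by norm_num) (Equiv.subRight (X j))).const_smul (w j)

lemma convolve_superpose [DecidableEq Γ] (hsum : Summable fun z => |a z|) {B : ℝ}
    (hG : ∀ x, |G x| ≤ B)
    (hres : ∀ x, convolve a G x = lam * G x - if x = 0 then 1 else 0)
    (X : ι → Γ) (w : ι → ℝ) (x : Γ) :
    convolve a (superpose G X w) x = lam * superpose G X w x - pointSource X w x := by
  unfold superpose pointSource
  rw [convolve_finset_sum (K := fun j z => G (z - X j)) _ hsum (fun j z => hG (z - X j)),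
    Finset.mul_sum, ← Finset.sum_sub_distrib]
  refine Finset.sum_congr rfl fun j _ => ?_
  rw [convolve_comp_sub_right, hres]
  simp only [sub_eq_zero]
  split_ifs <;> ring

lemma superpose_apply_of_neg (hGneg : ∀ x, G (-x) = G x) (X : ι → Γ) (β v : ι → ℝ) (i : ι) :
    superpose G X (β * v) (X i) = ∑ j, β j * v j * G (X j - X i) :=
  Finset.sum_congr rfl fun j _ => by rw [← neg_sub, hGneg]; rfl

theorem exists_eigenvector_iff_exists_solution [DecidableEq Γ]
    (hnonneg : ∀ z, z ≠ 0 → 0 ≤ a z) (hsum : Summable fun z => |a z|) (htot : ∑' z, a z = 0)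
    (hlam : 0 < lam)
    (hG : Memℓp G 2) (hGneg : ∀ x, G (-x) = G x)
    (hres : ∀ x, convolve a G x = lam * G x - if x = 0 then 1 else 0)
    (X : ι → Γ) (β : ι → ℝ) (H : ℓ²(Γ) → ℓ²(Γ))
    (hH : ∀ u x, H u x = convolve a u x + ∑ j, if x = X j then β j * u x else 0) :
    (∃ f : ℓ²(Γ), f ≠ 0 ∧ H f = lam • f) ↔
      ∃ v : ι → ℝ, v ≠ 0 ∧ ∀ i, v i = ∑ j, β j * v j * G (X j - X i) := by
  have hbound (f : ℓ²(Γ)) (x : Γ) : |f x| ≤ ‖f‖ := lp.norm_apply_le_norm two_ne_zero f x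
  let S (w : ι → ℝ) : ℓ²(Γ) := ⟨superpose G X w, memℓp_superpose hG X w⟩
  have hS (w : ι → ℝ) (x : Γ) : convolve a (S w) x = lam * S w x - pointSource X w x :=
    convolve_superpose hsum (hbound ⟨G, hG⟩) hres X w x
  have hsrc (f : ℓ²(Γ)) (x : Γ) :
      (∑ j, if x = X j then β j * f x else 0) = pointSource X (β * (f ∘ X)) x :=
    Finset.sum_congr rfl fun j _ => by
      split_ifs with hx
      · rw [hx]; rfl
      · rfl
  have heigen (f : ℓ²(Γ)) : H f = lam • f ↔
      ∀ x, convolve a f x = lam * f x - pointSource X (β * (f ∘ X)) x := by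
    simp only [lp.ext_iff, funext_iff, lp.coeFn_smul, Pi.smul_apply, smul_eq_mul, hH, hsrc,
      eq_sub_iff_add_eq]
  constructor
  · rintro ⟨f, hf0, hf⟩
    set v : ι → ℝ := f ∘ X
    have hfS : f = S (β * v) := by
      have hzero := eq_zero_of_convolve_eq_mul hnonneg hsum htot hlam (hbound (f - S (β * v)))
        fun x => by
          rw [lp.coeFn_sub, convolve_sub hsum (hbound f) (hbound _), (heigen f).1 hf x, hS,
            Pi.sub_apply]
          ring
      exact sub_eq_zero.1 (lp.eq_zero_iff_coeFn_eq_zero.2 hzero)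
    refine ⟨v, fun hv => hf0 ?_, fun i => ?_⟩
    · rw [hfS, hv]
      ext x
      simp [S, superpose]
    · exact (congrArg (fun g : ℓ²(Γ) => g (X i)) hfS).trans
        (superpose_apply_of_neg hGneg X β v i)
  · rintro ⟨v, hv0, hv⟩
    have hSv (i : ι) : S (β * v) (X i) = v i :=
      (superpose_apply_of_neg hGneg X β v i).trans (hv i).symm
    refine ⟨S (β * v), fun h0 => hv0 (funext fun i => by rw [← hSv i, h0]; rfl), ?_⟩
    rw [heigen]
    intro x
    rw [hS, show ⇑(S (β * v)) ∘ X = v from funext hSv]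

end Eigenvalue

lemma _root_.MeasureTheory.MemLp.inner_toLp {α : Type*} [MeasurableSpace α] {μ : Measure α}
    {f g : α → ℂ}
    (hf : MemLp f 2 μ) (hg : MemLp g 2 μ) :
    inner ℂ hf.toLp hg.toLp = ∫ x, conj (f x) * g x ∂μ := by
  refine integral_congr_ae ?_
  filter_upwards [hf.coeFn_toLp, hg.coeFn_toLp] with x hfx hgx
  rw [hfx, hgx, RCLike.inner_apply']

section Fourier

variable {d : ℕ}

def phase (θ : Fin d → ℝ) : (Fin d → ℤ) →+ ℝ where
  toFun x := ∑ i, θ i * x i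
  map_zero' := by simp
  map_add' x y := by simp [mul_add, Finset.sum_add_distrib]

lemma phase_apply (θ : Fin d → ℝ) (x : Fin d → ℤ) : phase θ x = ∑ i, θ i * (x i : ℝ) := rfl

@[fun_prop]
lemma continuous_phase_apply (x : Fin d → ℤ) : Continuous fun θ => phase θ x := by
  simp_rw [phase_apply]
  fun_prop

def box (d : ℕ) : Set (Fin d → ℝ) := Set.Icc (fun _ => -π) (fun _ => π)

def torusMeasure (d : ℕ) : Measure (Fin d → ℝ) := volume[|box d]

lemma volume_box : volume (box d) = ENNReal.ofReal ((2 * π) ^ d) := by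
  rw [box, Real.volume_Icc_pi, sub_neg_eq_add, ← two_mul, Finset.prod_const, Finset.card_univ,
    Fintype.card_fin, ENNReal.ofReal_pow Real.two_pi_pos.le]

instance : IsProbabilityMeasure (torusMeasure d) :=
  cond_isProbabilityMeasure_of_finite (by simp [volume_box, Real.pi_pos])
    (by simp [volume_box])

lemma integral_torusMeasure {E : Type*} [NormedAddCommGroup E] [NormedSpace ℝ E]
    (f : (Fin d → ℝ) → E) :
    ∫ θ, f θ ∂torusMeasure d = ((2 * π) ^ d)⁻¹ • ∫ θ in box d, f θ := by
  rw [torusMeasure, ProbabilityTheory.cond, integral_smul_measure, volume_box, ENNReal.toReal_inv,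
    ENNReal.toReal_ofReal (by positivity)]

lemma integrable_torusMeasure {E : Type*} [NormedAddCommGroup E] {f : (Fin d → ℝ) → E}
    (hf : Continuous f) : Integrable f (torusMeasure d) :=
  (hf.integrableOn_Icc).smul_measure (by simp [volume_box, Real.pi_pos])

lemma memLp_torusMeasure {E : Type*} [NormedAddCommGroup E] {f : (Fin d → ℝ) → E}
    (hf : Continuous f) {C : ℝ} (hC : ∀ θ, ‖f θ‖ ≤ C) (p : ℝ≥0∞) : MemLp f p (torusMeasure d) :=
  MemLp.of_bound hf.aestronglyMeasurable C (ae_of_all _ hC)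

lemma integral_Icc_exp_int_mul_I (n : ℤ) :
    ∫ t in Set.Icc (-π) π, Complex.exp (t * n * Complex.I) =
      if n = 0 then ((2 * π : ℝ) : ℂ) else 0 := by
  rw [integral_Icc_eq_integral_Ioc, ← intervalIntegral.integral_of_le (by linarith [pi_pos])]
  split_ifs with hn
  · simp [hn, two_mul]
  · have hc : (n : ℂ) * Complex.I ≠ 0 := mul_ne_zero (by exact_mod_cast hn) Complex.I_ne_zero
    simp_rw [mul_assoc, mul_comm (_ : ℂ) (_ * Complex.I)]
    rw [integral_exp_mul_complex hc, show (n : ℂ) * Complex.I * π =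
        n * Complex.I * ↑(-π) + n * (2 * π * Complex.I) by push_cast; ring,
      Complex.exp_add, Complex.exp_int_mul_two_pi_mul_I, mul_one, sub_self, zero_div]

lemma integral_exp_phase (u : Fin d → ℤ) :
    ∫ θ, Complex.exp (phase θ u * Complex.I) ∂torusMeasure d = if u = 0 then 1 else 0 := by
  have hbox : volume.restrict (box d) = Measure.pi fun _ => volume.restrict (Set.Icc (-π) π) := by
    rw [box, ← Set.pi_univ_Icc, volume_pi, Measure.restrict_pi_pi]
  have hprod (θ : Fin d → ℝ) :
      Complex.exp (phase θ u * Complex.I) = ∏ i, Complex.exp (θ i * u i * Complex.I) := by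
    rw [← Complex.exp_sum, phase_apply]
    push_cast
    rw [Finset.sum_mul]
  simp_rw [integral_torusMeasure, hprod, hbox]
  rw [integral_fintype_prod_eq_prod (fun i (t : ℝ) => Complex.exp (t * u i * Complex.I))]
  simp_rw [integral_Icc_exp_int_mul_I, Finset.prod_ite_zero, Finset.prod_const, Finset.mem_univ,
    true_imp_iff, funext_iff, Pi.zero_apply]
  split_ifs <;> simp [pi_ne_zero]

def cosTransform (h : (Fin d → ℝ) → ℝ) (x : Fin d → ℤ) : ℝ :=
  ∫ θ, cos (phase θ x) * h θ ∂torusMeasure d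

lemma cosTransform_neg (h : (Fin d → ℝ) → ℝ) (x : Fin d → ℤ) :
    cosTransform h (-x) = cosTransform h x := by
  simp only [cosTransform, map_neg, cos_neg]

lemma integral_cos_phase (u : Fin d → ℤ) :
    ∫ θ, cos (phase θ u) ∂torusMeasure d = if u = 0 then 1 else 0 := by
  have h := congrArg Complex.re (integral_exp_phase u)
  rw [← RCLike.re_to_complex, ← integral_re (integrable_torusMeasure (by fun_prop))] at h
  simpa only [RCLike.re_to_complex, Complex.exp_ofReal_mul_I_re, apply_ite Complex.re,
    Complex.one_re, Complex.zero_re] using h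

lemma memℓp_cosTransform {h : (Fin d → ℝ) → ℝ} (hh : MemLp h 2 (torusMeasure d)) :
    Memℓp (cosTransform h) 2 := by
  have hexp (u : Fin d → ℤ) :
      MemLp (fun θ => Complex.exp (phase θ u * Complex.I)) 2 (torusMeasure d) :=
    memLp_torusMeasure (by fun_prop) (fun θ => (Complex.norm_exp_ofReal_mul_I _).le) 2
  let e (u : Fin d → ℤ) : Lp ℂ 2 (torusMeasure d) := MemLp.toLp _ (hexp u)
  -- `cosTransform h u` is the real part of `⟪e u, h⟫`, so Bessel's inequality applies.
  have he : Orthonormal ℂ e := by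
    rw [orthonormal_iff_ite]
    intro u v
    have hmul (θ : Fin d → ℝ) : conj (Complex.exp (phase θ u * Complex.I)) *
        Complex.exp (phase θ v * Complex.I) = Complex.exp (phase θ (v - u) * Complex.I) := by
      rw [← Complex.exp_conj, map_mul, Complex.conj_ofReal, Complex.conj_I, ← Complex.exp_add,
        map_sub]
      push_cast
      ring_nf
    rw [MemLp.inner_toLp]
    simp_rw [hmul]
    rw [integral_exp_phase]
    simp only [sub_eq_zero, eq_comm]
  have hle (u : Fin d → ℤ) : |cosTransform h u| ≤ ‖inner ℂ (e u) (MemLp.toLp _ hh.ofReal)‖ := by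
    have hint : Integrable (fun θ => conj (Complex.exp (phase θ u * Complex.I)) * h θ)
        (torusMeasure d) :=
      (hh.integrable one_le_two).ofReal.bdd_mul (by fun_prop)
        (ae_of_all _ fun θ => by rw [Complex.norm_conj, Complex.norm_exp_ofReal_mul_I])
    have hre : cosTransform h u =
        (∫ θ, conj (Complex.exp (phase θ u * Complex.I)) * h θ ∂torusMeasure d).re := by
      rw [← RCLike.re_to_complex, ← integral_re hint]
      refine integral_congr_ae (ae_of_all _ fun θ => ?_)
      simp only [RCLike.re_to_complex, Complex.re_mul_ofReal, Complex.conj_re,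
        Complex.exp_ofReal_mul_I_re]
    rw [MemLp.inner_toLp, hre]
    exact Complex.abs_re_le_norm _
  refine (memℓp_gen_iff (by norm_num)).2 ?_
  refine (Orthonormal.inner_products_summable (MemLp.toLp _ hh.ofReal) he).of_nonneg_of_le
    (fun _ => by positivity) fun u => ?_
  rw [toReal_ofNat, Real.norm_eq_abs, Real.rpow_two]
  exact pow_le_pow_left₀ (abs_nonneg _) (hle u) 2

end Fourier

section Symbol

variable {d : ℕ} {a : (Fin d → ℤ) → ℝ}

def symbol (a : (Fin d → ℤ) → ℝ) (θ : Fin d → ℝ) : ℝ := ∑' z, a z * cos (phase θ z)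

lemma continuous_symbol (hsum : Summable fun z => |a z|) : Continuous (symbol a) :=
  continuous_tsum (fun z => by fun_prop) hsum fun z θ => by
    rw [Real.norm_eq_abs, abs_mul]
    exact mul_le_of_le_one_right (abs_nonneg _) (abs_cos_le_one _)

lemma symbol_nonpos (hnonneg : ∀ z, z ≠ 0 → 0 ≤ a z) (hsum : Summable fun z => |a z|)
    (htot : ∑' z, a z = 0) (θ : Fin d → ℝ) : symbol a θ ≤ 0 := by
  rw [← htot]
  refine (summable_mul_of_abs_le hsum fun z => abs_cos_le_one _).tsum_le_tsum (fun z => ?_)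
    (summable_abs_iff.1 hsum)
  rcases eq_or_ne z 0 with rfl | hz
  · simp
  · exact mul_le_of_le_one_right (hnonneg z hz) (cos_le_one _)

lemma tsum_mul_sin_phase (hsymm : ∀ z, a z = a (-z)) (θ : Fin d → ℝ) :
    ∑' z, a z * sin (phase θ z) = 0 := by
  have h : ∑' z, a z * sin (phase θ z) = -∑' z, a z * sin (phase θ z) := by
    rw [← tsum_neg, ← (Equiv.neg _).tsum_eq]
    exact tsum_congr fun z => by simp [← hsymm]
  linarith

lemma tsum_mul_cos_phase_sub (hsymm : ∀ z, a z = a (-z)) (hsum : Summable fun z => |a z|)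
    (θ : Fin d → ℝ) (x : Fin d → ℤ) :
    ∑' z, a z * cos (phase θ (x - z)) = cos (phase θ x) * symbol a θ := by
  have hterm (z : Fin d → ℤ) : a z * cos (phase θ (x - z)) =
      cos (phase θ x) * (a z * cos (phase θ z)) + sin (phase θ x) * (a z * sin (phase θ z)) := by
    rw [map_sub, cos_sub]
    ring
  rw [tsum_congr hterm,
    ((summable_mul_of_abs_le hsum fun _ => abs_cos_le_one _).mul_left _).tsum_add
      ((summable_mul_of_abs_le hsum fun _ => abs_sin_le_one _).mul_left _),
    tsum_mul_left, tsum_mul_left, tsum_mul_sin_phase hsymm, mul_zero, add_zero, symbol]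

lemma convolve_cosTransform (hsymm : ∀ z, a z = a (-z)) (hsum : Summable fun z => |a z|)
    {h : (Fin d → ℝ) → ℝ} (hh : Integrable h (torusMeasure d)) (x : Fin d → ℤ) :
    convolve a (cosTransform h) x = cosTransform (fun θ => symbol a θ * h θ) x := by
  have hcos (y : Fin d → ℤ) (θ : Fin d → ℝ) : ‖cos (phase θ y)‖ ≤ 1 := abs_cos_le_one _
  have hint (y : Fin d → ℤ) : Integrable (fun θ => cos (phase θ y) * h θ) (torusMeasure d) :=
    hh.bdd_mul (by fun_prop) (ae_of_all _ (hcos y))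
  have hnorm (z : Fin d → ℤ) : ∫ θ, ‖a z * (cos (phase θ (x - z)) * h θ)‖ ∂torusMeasure d ≤
      |a z| * ∫ θ, ‖h θ‖ ∂torusMeasure d := by
    rw [← integral_const_mul]
    refine integral_mono ((hint _).const_mul _).norm (hh.norm.const_mul _) fun θ => ?_
    rw [norm_mul, norm_mul, Real.norm_eq_abs (a z)]
    exact mul_le_mul_of_nonneg_left (mul_le_of_le_one_left (norm_nonneg _) (hcos _ θ))
      (abs_nonneg _)
  rw [convolve_eq_tsum]
  simp_rw [cosTransform, ← integral_const_mul]
  rw [integral_tsum_of_summable_integral_norm (fun z => (hint _).const_mul _)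
    ((hsum.mul_right _).of_nonneg_of_le (fun _ => integral_nonneg fun _ => norm_nonneg _) hnorm)]
  refine integral_congr_ae (ae_of_all _ fun θ => ?_)
  simp_rw [← mul_assoc, tsum_mul_right, tsum_mul_cos_phase_sub hsymm hsum]

variable {lam : ℝ}

def resolventKernel (a : (Fin d → ℤ) → ℝ) (lam : ℝ) : (Fin d → ℤ) → ℝ :=
  cosTransform fun θ => (lam - symbol a θ)⁻¹

section

variable (hnonneg : ∀ z, z ≠ 0 → 0 ≤ a z) (hsum : Summable fun z => |a z|)
  (htot : ∑' z, a z = 0) (hlam : 0 < lam)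
include hnonneg hsum htot hlam

lemma sub_symbol_pos (θ : Fin d → ℝ) : 0 < lam - symbol a θ := by
  linarith [symbol_nonpos hnonneg hsum htot θ]

lemma continuous_inv_sub_symbol : Continuous fun θ => (lam - symbol a θ)⁻¹ :=
  (continuous_const.sub (continuous_symbol hsum)).inv₀ fun θ =>
    (sub_symbol_pos hnonneg hsum htot hlam θ).ne'

lemma memℓp_resolventKernel : Memℓp (resolventKernel a lam) 2 :=
  memℓp_cosTransform <| memLp_torusMeasure (continuous_inv_sub_symbol hnonneg hsum htot hlam)
    (fun θ => by
      have hpos := sub_symbol_pos hnonneg hsum htot hlam θ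
      rw [Real.norm_eq_abs, abs_of_pos (inv_pos.2 hpos)]
      exact inv_anti₀ hlam (by linarith [symbol_nonpos hnonneg hsum htot θ])) 2

lemma convolve_resolventKernel (hsymm : ∀ z, a z = a (-z)) (x : Fin d → ℤ) :
    convolve a (resolventKernel a lam) x =
      lam * resolventKernel a lam x - if x = 0 then 1 else 0 := by
  have hcont := continuous_inv_sub_symbol hnonneg hsum htot hlam
  have hsymbol := continuous_symbol hsum
  rw [resolventKernel, convolve_cosTransform hsymm hsum (integrable_torusMeasure hcont),
    ← integral_cos_phase, eq_sub_iff_add_eq, cosTransform, cosTransform, ← integral_const_mul,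
    ← integral_add (integrable_torusMeasure (by fun_prop)) (integrable_torusMeasure (by fun_prop))]
  refine integral_congr_ae (ae_of_all _ fun θ => ?_)
  have := (sub_symbol_pos hnonneg hsum htot hlam θ).ne'
  field_simp
  ring

end

end Symbol

end PointPerturbation

end

theorem eigenvalue_iff_system_general (d : ℕ) (a : (Fin d → ℤ) → ℝ)
    (hsymm : ∀ z, a z = a (-z))
    (hnonneg : ∀ z, z ≠ 0 → 0 ≤ a z)
    (hsum : Summable fun z => |a z|)
    (htot : ∑' z, a z = 0)
    (A : lp (fun _ : Fin d → ℤ => ℝ) 2 →L[ℝ] lp (fun _ : Fin d → ℤ => ℝ) 2)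
    (hA : ∀ (u : lp (fun _ : Fin d → ℤ => ℝ) 2) (x : Fin d → ℤ),
      A u x = ∑' x' : Fin d → ℤ, a (x - x') * u x')
    (N : ℕ) (X : Fin N → Fin d → ℤ)
    (β : Fin N → ℝ)
    (H : lp (fun _ : Fin d → ℤ => ℝ) 2 →L[ℝ] lp (fun _ : Fin d → ℤ => ℝ) 2)
    (hH : ∀ (u : lp (fun _ : Fin d → ℤ => ℝ) 2) (x : Fin d → ℤ),
      H u x = A u x + ∑ j : Fin N, if x = X j then β j * u x else 0)
    (phi : (Fin d → ℝ) → ℝ)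
    (hphi : ∀ θ, phi θ = ∑' z : Fin d → ℤ, a z * Real.cos (∑ i, θ i * (z i : ℝ)))
    (I : ℝ → (Fin d → ℤ) → ℝ)
    (hI : ∀ (lam : ℝ) (x : Fin d → ℤ), I lam x = ((2 * Real.pi) ^ d)⁻¹ *
      ∫ θ in Set.Icc (fun _ : Fin d => -Real.pi) (fun _ : Fin d => Real.pi),
        Real.cos (∑ i, θ i * (x i : ℝ)) / (lam - phi θ))
    (lam : ℝ) (hlam : 0 < lam) :
    (∃ f : lp (fun _ : Fin d → ℤ => ℝ) 2, f ≠ 0 ∧ H f = lam • f) ↔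
      (∃ v : Fin N → ℝ, v ≠ 0 ∧ ∀ i, v i = ∑ j, β j * v j * I lam (X j - X i)) := by
  open PointPerturbation in
  obtain rfl : phi = symbol a := funext hphi
  have hI' : I lam = resolventKernel a lam := funext fun x => by
    simp_rw [hI, resolventKernel, cosTransform, integral_torusMeasure, smul_eq_mul, phase_apply,
      box, div_eq_mul_inv]
  rw [hI']
  exact exists_eigenvector_iff_exists_solution hnonneg hsum htot hlam
    (memℓp_resolventKernel hnonneg hsum htot hlam) (cosTransform_neg _)
    (convolve_resolventKernel hnonneg hsum htot hlam hsymm) X β H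
    fun u x => by rw [hH, hA]; rfl

/-- `λ > 0` is an eigenvalue of `H` iff the linear system
`v_i = ∑_j β_j v_j I_{x_j - x_i}(λ)` has a non-trivial solution. -/
theorem eigenvalue_iff_system (d : ℕ) (hd : 1 ≤ d) (a : (Fin d → ℤ) → ℝ)
    (hsymm : ∀ z, a z = a (-z))
    (hnonneg : ∀ z, z ≠ 0 → 0 ≤ a z)
    (hneg : a 0 < 0)
    (hsum : Summable fun z => |a z|)
    (htot : ∑' z, a z = 0)
    (hirr : ∀ z : Fin d → ℤ, ∃ (k : ℕ) (zs : Fin k → Fin d → ℤ),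
      z = ∑ i, zs i ∧ ∀ i, a (zs i) ≠ 0)
    (A : lp (fun _ : Fin d → ℤ => ℝ) 2 →L[ℝ] lp (fun _ : Fin d → ℤ => ℝ) 2)
    (hA : ∀ (u : lp (fun _ : Fin d → ℤ => ℝ) 2) (x : Fin d → ℤ),
      A u x = ∑' x' : Fin d → ℤ, a (x - x') * u x')
    (N : ℕ) (hN : 1 ≤ N) (X : Fin N → Fin d → ℤ) (hX : Function.Injective X)
    (β : Fin N → ℝ) (hβ : ∀ j, 0 < β j)
    (H : lp (fun _ : Fin d → ℤ => ℝ) 2 →L[ℝ] lp (fun _ : Fin d → ℤ => ℝ) 2)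
    (hH : ∀ (u : lp (fun _ : Fin d → ℤ => ℝ) 2) (x : Fin d → ℤ),
      H u x = A u x + ∑ j : Fin N, if x = X j then β j * u x else 0)
    (phi : (Fin d → ℝ) → ℝ)
    (hphi : ∀ θ, phi θ = ∑' z : Fin d → ℤ, a z * Real.cos (∑ i, θ i * (z i : ℝ)))
    (I : ℝ → (Fin d → ℤ) → ℝ)
    (hI : ∀ (lam : ℝ) (x : Fin d → ℤ), I lam x = ((2 * Real.pi) ^ d)⁻¹ *
      ∫ θ in Set.Icc (fun _ : Fin d => -Real.pi) (fun _ : Fin d => Real.pi),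
        Real.cos (∑ i, θ i * (x i : ℝ)) / (lam - phi θ))
    (lam : ℝ) (hlam : 0 < lam) :
    (∃ f : lp (fun _ : Fin d → ℤ => ℝ) 2, f ≠ 0 ∧ H f = lam • f) ↔
      (∃ v : Fin N → ℝ, v ≠ 0 ∧ ∀ i, v i = ∑ j, β j * v j * I lam (X j - X i)) :=
  eigenvalue_iff_system_general d a hsymm hnonneg hsum htot A hA N X β H hH phi hphi I hI lam hlam
end

section
/- The subspace of ℓ²(ℤ^d) spanned by the union, over all λ > 0, of the eigenspaces ker(H − λ·I) has dimension at most N. Equivalently, any N + 1 eigenvectors of H corresponding to positive eigenvalues are linearly dependent. -/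
/-!
Eigenvectors of `H` for distinct eigenvalues are orthogonal, so `⟪H g, g⟫ > 0` for every nonzero `g`
in the span of the eigenvectors with positive eigenvalues. On the other hand `A` is negative
semidefinite: `⟪A u, u⟫ = ∑ z, a z ⟪u, u (· - z)⟫ ≤ (∑ z, a z) ‖u‖² = 0`, because `a` is
nonnegative off the origin and `|⟪u, u (· - z)⟫| ≤ ‖u‖²`. If `g` vanishes at every `X j` then
`H g = A g`, so no nonzero `g` of that span does, and `g ↦ (g (X j))ⱼ` embeds it into `ℝ^N`.
-/

open scoped lp
open Module.End

namespace LinearMap.IsSymmetric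

universe u v

variable {E : Type u} [NormedAddCommGroup E] [InnerProductSpace ℝ E] {T : E →ₗ[ℝ] E}

theorem inner_map_self_pos_of_mem_iSup_eigenspace (hT : T.IsSymmetric) {g : E}
    (hg : g ∈ ⨆ μ : Set.Ioi (0 : ℝ), eigenspace T μ) (hg0 : g ≠ 0) :
    0 < inner ℝ (T g) g := by
  obtain ⟨F, hF, rfl⟩ := (Submodule.mem_iSup_iff_exists_finsupp _ _).mp hg
  let v : ∀ μ : Set.Ioi (0 : ℝ), eigenspace T μ := fun μ => ⟨F μ, hF μ⟩
  have hTv : ∀ μ, T (F μ) = (μ : ℝ) • F μ := fun μ => mem_eigenspace_iff.mp (hF μ)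
  have hsum : inner ℝ (T (F.sum fun _ x => x)) (F.sum fun _ x => x)
      = ∑ μ ∈ F.support, (μ : ℝ) * ‖F μ‖ ^ 2 := by
    have := (hT.orthogonalFamily_eigenspaces.comp Subtype.coe_injective).inner_sum
      (fun μ => (μ : ℝ) • v μ) v F.support
    simp only [Finsupp.sum, map_sum, hTv]
    simpa [v, inner_smul_left, real_inner_self_eq_norm_sq] using this
  obtain ⟨μ, hμ⟩ : ∃ μ, F μ ≠ 0 := by
    by_contra! h
    exact hg0 (by simp [Finsupp.sum, h])
  rw [hsum]
  exact Finset.sum_pos' (fun ν _ => mul_nonneg (le_of_lt ν.2) (sq_nonneg _))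
    ⟨μ, F.mem_support_iff.mpr hμ, mul_pos μ.2 (pow_pos (norm_pos_iff.mpr hμ) 2)⟩

theorem rank_span_pos_eigenvectors_le {F : Type v} [AddCommGroup F] [Module ℝ F]
    (hT : T.IsSymmetric) (φ : E →ₗ[ℝ] F) (hφ : ∀ g ∈ ker φ, inner ℝ (T g) g ≤ 0) :
    Cardinal.lift.{v} (Module.rank ℝ (Submodule.span ℝ {f | ∃ μ : ℝ, 0 < μ ∧ T f = μ • f}))
      ≤ Cardinal.lift.{u} (Module.rank ℝ F) := by
  have hspan : Submodule.span ℝ {f | ∃ μ : ℝ, 0 < μ ∧ T f = μ • f}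
      ≤ ⨆ μ : Set.Ioi (0 : ℝ), eigenspace T μ := by
    rw [Submodule.span_le]
    rintro f ⟨μ, hμ, hf⟩
    exact Submodule.mem_iSup_of_mem ⟨μ, hμ⟩ (mem_eigenspace_iff.mpr hf)
  refine lift_rank_le_of_injective (φ ∘ₗ Submodule.subtype _) ?_
  refine (injective_iff_map_eq_zero _).mpr fun g hg => Subtype.ext ?_
  by_contra hg0
  exact (hT.inner_map_self_pos_of_mem_iSup_eigenspace (hspan g.2) hg0).not_ge (hφ g hg)

end LinearMap.IsSymmetric

namespace lp

variable {ι : Type*}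

theorem real_inner_eq_tsum (u v : ℓ²(ι, ℝ)) :
    inner ℝ u v = ∑' x, u x * v x := by
  simp [lp.inner_eq_tsum, mul_comm]

theorem tsum_sq_eq_norm_sq (u : ℓ²(ι, ℝ)) : ∑' x, u x ^ 2 = ‖u‖ ^ 2 := by
  rw [← real_inner_self_eq_norm_sq, real_inner_eq_tsum]
  simp only [sq]

theorem summable_sq (u : ℓ²(ι, ℝ)) : Summable fun x => u x ^ 2 := by
  simpa [sq, mul_comm] using lp.summable_inner (𝕜 := ℝ) u u

theorem isSymmetric_of_apply_eq_mul (T : ℓ²(ι, ℝ) →L[ℝ] ℓ²(ι, ℝ)) (m : ι → ℝ)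
    (hT : ∀ u x, T u x = m x * u x) : (T : ℓ²(ι, ℝ) →ₗ[ℝ] ℓ²(ι, ℝ)).IsSymmetric := by
  intro u v
  simp only [ContinuousLinearMap.coe_coe, real_inner_eq_tsum, hT]
  exact tsum_congr fun x => by ring

end lp

theorem abs_mul_le_add_sq_div_two (s t : ℝ) : |s * t| ≤ (s ^ 2 + t ^ 2) / 2 := by
  rw [abs_mul, ← sq_abs s, ← sq_abs t]
  linarith [two_mul_le_add_sq |s| |t|]

section Correlation

variable {G : Type*} [AddCommGroup G]

noncomputable def correlation (u v : ℓ²(G, ℝ)) (z : G) : ℝ := ∑' x, u x * v (x - z)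

theorem summable_abs_mul_sub (u v : ℓ²(G, ℝ)) (z : G) :
    Summable fun x => |u x * v (x - z)| :=
  .of_nonneg_of_le (fun _ => abs_nonneg _) (fun _ => abs_mul_le_add_sq_div_two _ _)
    (((lp.summable_sq u).add ((Equiv.subRight z).summable_iff.mpr (lp.summable_sq v))).div_const 2)

theorem tsum_abs_mul_sub_le (u v : ℓ²(G, ℝ)) (z : G) :
    ∑' x, |u x * v (x - z)| ≤ (‖u‖ ^ 2 + ‖v‖ ^ 2) / 2 := by
  have hv : Summable fun x => v (x - z) ^ 2 :=
    (Equiv.subRight z).summable_iff.mpr (lp.summable_sq v)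
  have hv' : ∑' x, v (x - z) ^ 2 = ‖v‖ ^ 2 :=
    ((Equiv.subRight z).tsum_eq fun x => v x ^ 2).trans (lp.tsum_sq_eq_norm_sq v)
  calc ∑' x, |u x * v (x - z)| ≤ ∑' x, (u x ^ 2 + v (x - z) ^ 2) / 2 :=
        (summable_abs_mul_sub u v z).tsum_le_tsum (fun x => abs_mul_le_add_sq_div_two _ _)
          (((lp.summable_sq u).add hv).div_const 2)
    _ = (‖u‖ ^ 2 + ‖v‖ ^ 2) / 2 := by
        rw [tsum_div_const, (lp.summable_sq u).tsum_add hv, lp.tsum_sq_eq_norm_sq, hv']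

theorem abs_correlation_le (u v : ℓ²(G, ℝ)) (z : G) :
    |correlation u v z| ≤ (‖u‖ ^ 2 + ‖v‖ ^ 2) / 2 := by
  have := norm_tsum_le_tsum_norm (f := fun x => u x * v (x - z))
    (by simpa only [Real.norm_eq_abs] using summable_abs_mul_sub u v z)
  simp only [Real.norm_eq_abs] at this
  exact this.trans (tsum_abs_mul_sub_le u v z)

theorem correlation_self_zero (u : ℓ²(G, ℝ)) : correlation u u 0 = ‖u‖ ^ 2 := by
  simp only [correlation, sub_zero, ← sq, lp.tsum_sq_eq_norm_sq]

theorem correlation_neg (u v : ℓ²(G, ℝ)) (z : G) :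
    correlation u v (-z) = correlation v u z := by
  rw [correlation, ← (Equiv.subRight z).tsum_eq]
  simp only [correlation, Equiv.subRight_apply, sub_neg_eq_add, sub_add_cancel, mul_comm]

end Correlation

section Convolution

variable {G : Type*} [AddCommGroup G] {a : G → ℝ} (ha : Summable fun z => |a z|)
include ha

theorem summable_mul_mul_sub (u v : ℓ²(G, ℝ)) :
    Summable fun p : G × G => a p.1 * (u p.2 * v (p.2 - p.1)) := by
  refine summable_abs_iff.mp ((summable_prod_of_nonneg fun _ => abs_nonneg _).mpr ⟨fun z => ?_, ?_⟩)
  · simpa only [abs_mul] using (summable_abs_mul_sub u v z).mul_left |a z|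
  · refine .of_nonneg_of_le (fun _ => tsum_nonneg fun _ => abs_nonneg _) (fun z => ?_)
      (ha.mul_right ((‖u‖ ^ 2 + ‖v‖ ^ 2) / 2))
    have hrow := tsum_abs_mul_sub_le u v z
    simp only [abs_mul, tsum_mul_left] at hrow ⊢
    exact mul_le_mul_of_nonneg_left hrow (abs_nonneg _)

theorem summable_mul_correlation (u v : ℓ²(G, ℝ)) :
    Summable fun z => a z * correlation u v z :=
  (summable_mul_mul_sub ha u v).prod.congr fun z => by dsimp only; exact tsum_mul_left

variable {A : ℓ²(G, ℝ) →L[ℝ] ℓ²(G, ℝ)} (hA : ∀ u x, A u x = ∑' x', a (x - x') * u x')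
include hA

theorem inner_conv_eq_tsum_mul_correlation (u v : ℓ²(G, ℝ)) :
    inner ℝ u (A v) = ∑' z, a z * correlation u v z := by
  have hreindex : ∀ x, ∑' x', a (x - x') * v x' = ∑' z, a z * v (x - z) := fun x => by
    rw [← (Equiv.subLeft x).tsum_eq]
    simp only [Equiv.subLeft_apply, _root_.sub_sub_cancel]
  calc inner ℝ u (A v) = ∑' x, ∑' z, a z * (u x * v (x - z)) := by
        simp only [lp.real_inner_eq_tsum, hA, hreindex, ← tsum_mul_left]
        exact tsum_congr fun x => tsum_congr fun z => by ring
    _ = ∑' z, ∑' x, a z * (u x * v (x - z)) := (summable_mul_mul_sub ha u v).tsum_comm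
    _ = ∑' z, a z * correlation u v z := tsum_congr fun z => tsum_mul_left

theorem conv_isSymmetric (hsymm : ∀ z, a z = a (-z)) :
    (A : ℓ²(G, ℝ) →ₗ[ℝ] ℓ²(G, ℝ)).IsSymmetric := by
  intro u v
  rw [ContinuousLinearMap.coe_coe, real_inner_comm,
    inner_conv_eq_tsum_mul_correlation ha hA, inner_conv_eq_tsum_mul_correlation ha hA,
    ← (Equiv.neg G).tsum_eq]
  simp only [Equiv.neg_apply, ← hsymm, correlation_neg]

theorem inner_conv_self_nonpos (hnonneg : ∀ z, z ≠ 0 → 0 ≤ a z) (htot : ∑' z, a z = 0)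
    (u : ℓ²(G, ℝ)) :
    inner ℝ (A u) u ≤ 0 := by
  rw [real_inner_comm, inner_conv_eq_tsum_mul_correlation ha hA]
  calc ∑' z, a z * correlation u u z ≤ ∑' z, a z * ‖u‖ ^ 2 :=
        (summable_mul_correlation ha u u).tsum_le_tsum (fun z => ?_)
          ((summable_abs_iff.mp ha).mul_right _)
    _ = 0 := by rw [tsum_mul_right, htot, zero_mul]
  obtain rfl | hz := eq_or_ne z 0
  · rw [correlation_self_zero]
  · exact mul_le_mul_of_nonneg_left ((le_abs_self _).trans
      ((abs_correlation_le u u z).trans_eq (add_self_div_two _))) (hnonneg z hz)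

end Convolution

theorem rank_positive_eigenspaces_le_general (d : ℕ) (a : (Fin d → ℤ) → ℝ)
    (hsymm : ∀ z, a z = a (-z))
    (hnonneg : ∀ z, z ≠ 0 → 0 ≤ a z)
    (hsum : Summable fun z => |a z|)
    (htot : ∑' z, a z = 0)
    (A : lp (fun _ : Fin d → ℤ => ℝ) 2 →L[ℝ] lp (fun _ : Fin d → ℤ => ℝ) 2)
    (hA : ∀ (u : lp (fun _ : Fin d → ℤ => ℝ) 2) (x : Fin d → ℤ),
      A u x = ∑' x' : Fin d → ℤ, a (x - x') * u x')
    (N : ℕ) (X : Fin N → Fin d → ℤ)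
    (β : Fin N → ℝ)
    (H : lp (fun _ : Fin d → ℤ => ℝ) 2 →L[ℝ] lp (fun _ : Fin d → ℤ => ℝ) 2)
    (hH : ∀ (u : lp (fun _ : Fin d → ℤ => ℝ) 2) (x : Fin d → ℤ),
      H u x = A u x + ∑ j : Fin N, if x = X j then β j * u x else 0) :
    Module.rank ℝ
      ↥(Submodule.span ℝ {f : lp (fun _ : Fin d → ℤ => ℝ) 2 |
          ∃ lam : ℝ, 0 < lam ∧ H f = lam • f}) ≤ (N : Cardinal) := by
  have hpot : ∀ u x, (H - A) u x = (∑ j, if x = X j then β j else 0) * u x := fun u x => by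
    simp [hH, Finset.sum_mul, ite_mul]
  have hHsymm : (H : ℓ²(Fin d → ℤ, ℝ) →ₗ[ℝ] ℓ²(Fin d → ℤ, ℝ)).IsSymmetric := by
    simpa using (conv_isSymmetric hsum hA hsymm).add (lp.isSymmetric_of_apply_eq_mul _ _ hpot)
  let φ := LinearMap.pi fun j => lp.evalₗ (𝕜 := ℝ) (fun _ : Fin d → ℤ => ℝ) 2 (X j)
  have hker : ∀ g ∈ LinearMap.ker φ, inner ℝ (H g) g ≤ 0 := by
    intro g hg
    have hgX : ∀ j, g (X j) = 0 := fun j => congrFun (LinearMap.mem_ker.mp hg) j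
    have hHg : H g = A g := lp.ext <| funext fun x => by
      rw [hH, Finset.sum_eq_zero fun j _ => by split_ifs with hx <;> simp [hx, hgX], add_zero]
    exact hHg ▸ inner_conv_self_nonpos hsum hA hnonneg htot g
  simpa using hHsymm.rank_span_pos_eigenvectors_le φ hker

/-- The span of the eigenspaces of `H` corresponding to positive eigenvalues has
dimension at most `N`. -/
theorem rank_positive_eigenspaces_le (d : ℕ) (hd : 1 ≤ d) (a : (Fin d → ℤ) → ℝ)
    (hsymm : ∀ z, a z = a (-z))
    (hnonneg : ∀ z, z ≠ 0 → 0 ≤ a z)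
    (hneg : a 0 < 0)
    (hsum : Summable fun z => |a z|)
    (htot : ∑' z, a z = 0)
    (hirr : ∀ z : Fin d → ℤ, ∃ (k : ℕ) (zs : Fin k → Fin d → ℤ),
      z = ∑ i, zs i ∧ ∀ i, a (zs i) ≠ 0)
    (A : lp (fun _ : Fin d → ℤ => ℝ) 2 →L[ℝ] lp (fun _ : Fin d → ℤ => ℝ) 2)
    (hA : ∀ (u : lp (fun _ : Fin d → ℤ => ℝ) 2) (x : Fin d → ℤ),
      A u x = ∑' x' : Fin d → ℤ, a (x - x') * u x')
    (N : ℕ) (hN : 1 ≤ N) (X : Fin N → Fin d → ℤ) (hX : Function.Injective X)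
    (β : Fin N → ℝ) (hβ : ∀ j, 0 < β j)
    (H : lp (fun _ : Fin d → ℤ => ℝ) 2 →L[ℝ] lp (fun _ : Fin d → ℤ => ℝ) 2)
    (hH : ∀ (u : lp (fun _ : Fin d → ℤ => ℝ) 2) (x : Fin d → ℤ),
      H u x = A u x + ∑ j : Fin N, if x = X j then β j * u x else 0) :
    Module.rank ℝ
      ↥(Submodule.span ℝ {f : lp (fun _ : Fin d → ℤ => ℝ) 2 |
          ∃ lam : ℝ, 0 < lam ∧ H f = lam • f}) ≤ (N : Cardinal) :=
  rank_positive_eigenspaces_le_general d a hsymm hnonneg hsum htot A hA N X β H hH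
end

section
/- A number λ > 0 is an eigenvalue of the operator H on ℓ²(ℤ^d) if and only if 1 is an eigenvalue of the N×N matrix G(λ), i.e. if and only if det(G(λ) − I) = 0. -/
/-!
For `λ > 0` the operator `λ - A` is injective on `ℓ²`: at a point `x₀` where `u²` is maximal,
`λ u(x₀)² = (A u)(x₀) u(x₀) ≤ (∑ a) u(x₀)² = 0`, because `a ≥ 0` off the origin.
Since `φ ≤ 0`, the function `1 / (λ - φ)` is continuous on the torus, and Fourier analysis shows
that its cosine coefficients `g(x) = I_x(λ)` solve `(λ - A) g = δ₀`; they are square-summable by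
Bessel's inequality for the characters `e^{iθ⬝x}`. Now `H f = λ f` says
`(λ - A) f = ∑ⱼ βⱼ f(xⱼ) δ_{xⱼ}`, so by injectivity every eigenfunction is
`f = ∑ⱼ βⱼ f(xⱼ) g(· - xⱼ)`, and evaluating at the `xᵢ` gives `G(λ) v = v` for `v = (f(xᵢ))ᵢ`.
Conversely, a fixed vector `v` of `G(λ)` gives the eigenfunction `∑ⱼ βⱼ vⱼ g(· - xⱼ)`.
-/

open MeasureTheory Real Filter Complex
open scoped ComplexConjugate Matrix

noncomputable section

namespace PointInteraction

section Lattice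

variable {Γ : Type*} [AddGroup Γ]

omit [AddGroup Γ] in
theorem memℓp_two_iff_summable_sq {u : Γ → ℝ} : Memℓp u 2 ↔ Summable fun x => u x ^ 2 := by
  rw [memℓp_gen_iff (by norm_num)]
  simp [Real.norm_eq_abs, sq_abs]

theorem _root_.Memℓp.comp_sub_right {u : Γ → ℝ} (hu : Memℓp u 2) (y : Γ) :
    Memℓp (fun x => u (x - y)) 2 :=
  memℓp_two_iff_summable_sq.2 <|
    (Equiv.subRight y).summable_iff.2 (memℓp_two_iff_summable_sq.1 hu)

theorem exists_forall_sq_le {u : Γ → ℝ} (hu : Summable fun x => u x ^ 2) :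
    ∃ x₀, ∀ x, u x ^ 2 ≤ u x₀ ^ 2 := by
  by_cases h0 : ∀ x, u x = 0
  · exact ⟨0, fun x => by simp [h0]⟩
  obtain ⟨x₁, hx₁⟩ := not_forall.1 h0
  have hfin : {x | ¬u x ^ 2 < u x₁ ^ 2}.Finite :=
    eventually_cofinite.1 (hu.tendsto_cofinite_zero.eventually_lt_const (by positivity))
  obtain ⟨x₀, hx₀, hmax⟩ := Set.exists_max_image _ (fun x => u x ^ 2) hfin ⟨x₁, lt_irrefl _⟩
  refine ⟨x₀, fun x => ?_⟩
  by_cases hx : x ∈ {x | ¬u x ^ 2 < u x₁ ^ 2}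
  · exact hmax x hx
  · exact (not_not.1 hx |>.trans_le (not_lt.1 hx₀)).le

omit [AddGroup Γ] in
theorem summable_mul_of_abs_le {a f : Γ → ℝ} (hsum : Summable fun z => |a z|) {C : ℝ}
    (hf : ∀ z, |f z| ≤ C) : Summable fun z => a z * f z :=
  Summable.of_norm_bounded (hsum.mul_right C) fun z => by
    rw [norm_mul, Real.norm_eq_abs, Real.norm_eq_abs]
    exact mul_le_mul_of_nonneg_left (hf z) (abs_nonneg _)

theorem summable_mul_lp {a : Γ → ℝ} (hsum : Summable fun z => |a z|)
    (u : lp (fun _ : Γ => ℝ) 2) (x : Γ) : Summable fun x' => a (x - x') * u x' :=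
  summable_mul_of_abs_le ((Equiv.subLeft x).summable_iff.2 hsum) fun x' =>
    lp.norm_apply_le_norm two_ne_zero u x'

theorem eq_zero_of_forall_smul_eq_tsum {a : Γ → ℝ} (hnonneg : ∀ z, z ≠ 0 → 0 ≤ a z)
    (hsum : Summable fun z => |a z|) (htot : ∑' z, a z = 0) {lam : ℝ} (hlam : 0 < lam)
    (u : lp (fun _ : Γ => ℝ) 2) (hu : ∀ x, lam * u x = ∑' x', a (x - x') * u x') : u = 0 := by
  obtain ⟨x₀, hmax⟩ := exists_forall_sq_le (memℓp_two_iff_summable_sq.1 (lp.memℓp u))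
  have hterm : ∀ x', a (x₀ - x') * u x' * u x₀ ≤ a (x₀ - x') * u x₀ ^ 2 := fun x' => by
    rcases eq_or_ne x' x₀ with rfl | hx'
    · rw [sq, mul_assoc]
    · rw [mul_assoc]
      refine mul_le_mul_of_nonneg_left ?_ (hnonneg _ (sub_ne_zero.2 hx'.symm))
      nlinarith [hmax x', sq_nonneg (u x' - u x₀)]
  have hsa : Summable fun x' => a (x₀ - x') :=
    (Equiv.subLeft x₀).summable_iff.2 (summable_abs_iff.1 hsum)
  have hle : lam * u x₀ ^ 2 ≤ 0 :=
    calc lam * u x₀ ^ 2 = ∑' x', a (x₀ - x') * u x' * u x₀ := by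
          rw [sq, ← mul_assoc, hu, tsum_mul_right]
      _ ≤ ∑' x', a (x₀ - x') * u x₀ ^ 2 :=
          Summable.tsum_le_tsum hterm ((summable_mul_lp hsum u x₀).mul_right _)
            (hsa.mul_right _)
      _ = 0 := by
          rw [tsum_mul_right, show ∑' x', a (x₀ - x') = ∑' z, a z from
            (Equiv.subLeft x₀).tsum_eq a, htot, zero_mul]
  have hx₀ : u x₀ ^ 2 = 0 :=
    le_antisymm (nonpos_of_mul_nonpos_right hle hlam) (sq_nonneg _)
  ext x
  simpa [hx₀] using hmax x

def translateLp {r : Γ → ℝ} (hr : Memℓp r 2) (y : Γ) : lp (fun _ : Γ => ℝ) 2 :=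
  ⟨fun x => r (x - y), hr.comp_sub_right y⟩

@[simp]
theorem translateLp_apply {r : Γ → ℝ} (hr : Memℓp r 2) (y x : Γ) :
    translateLp hr y x = r (x - y) := rfl

variable [DecidableEq Γ] {a : Γ → ℝ} (A : lp (fun _ : Γ => ℝ) 2 →L[ℝ] lp (fun _ : Γ => ℝ) 2)
  (hA : ∀ u x, A u x = ∑' x', a (x - x') * u x') {lam : ℝ} {r : Γ → ℝ}
  (hres : ∀ x, lam * r x - ∑' x', a (x - x') * r x' = if x = 0 then 1 else 0)

include hA hres in
theorem smul_translateLp_sub (hr : Memℓp r 2) (y : Γ) :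
    lam • translateLp hr y - A (translateLp hr y) = lp.single 2 y 1 := by
  ext x
  have hshift : ∑' x', a (x - x') * r (x' - y) = ∑' x', a (x - y - x') * r x' := by
    rw [← (Equiv.addRight y).tsum_eq]
    simp [sub_add_eq_sub_sub_swap]
  simp only [lp.coeFn_sub, lp.coeFn_smul, Pi.sub_apply, Pi.smul_apply, smul_eq_mul, hA,
    translateLp_apply, hshift, hres, sub_eq_zero, lp.single_apply, Pi.single_apply]

include hA hres in
theorem exists_eigenvector_iff {ι : Type*} [Fintype ι] (hnonneg : ∀ z, z ≠ 0 → 0 ≤ a z)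
    (hsum : Summable fun z => |a z|) (htot : ∑' z, a z = 0) (hlam : 0 < lam)
    (hr : Memℓp r 2) (X : ι → Γ) (β : ι → ℝ) :
    (∃ f : lp (fun _ : Γ => ℝ) 2, f ≠ 0 ∧
        lam • f - A f = ∑ j, lp.single 2 (X j) (β j * f (X j))) ↔
      ∃ v : ι → ℝ, v ≠ 0 ∧ (Matrix.of fun i j => r (X i - X j) * β j) *ᵥ v = v := by
  set T : (ι → ℝ) → lp (fun _ : Γ => ℝ) 2 := fun c => ∑ j, c j • translateLp hr (X j)
  have hT : ∀ c, lam • T c - A (T c) = ∑ j, lp.single 2 (X j) (c j) := fun c => by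
    simp only [T, map_sum, map_smul, Finset.smul_sum, ← Finset.sum_sub_distrib, smul_comm lam,
      ← smul_sub, smul_translateLp_sub A hA hres, ← lp.single_smul, smul_eq_mul, mul_one]
  have hT_apply : ∀ c i, T c (X i) = ∑ j, r (X i - X j) * c j := fun c i => by
    simp only [T, lp.coeFn_sum, Finset.sum_apply, lp.coeFn_smul, Pi.smul_apply, smul_eq_mul,
      translateLp_apply, mul_comm]
  have hinj : ∀ u, lam • u - A u = 0 → u = 0 := fun u hu =>
    eq_zero_of_forall_smul_eq_tsum hnonneg hsum htot hlam u fun x => by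
      have hux := congrArg (fun f : lp (fun _ : Γ => ℝ) 2 => f x) hu
      simp only [lp.coeFn_sub, lp.coeFn_smul, lp.coeFn_zero, Pi.sub_apply, Pi.smul_apply,
        Pi.zero_apply, smul_eq_mul, sub_eq_zero] at hux
      rw [hux, hA]
  have hmulVec : ∀ v i, ((Matrix.of fun i j => r (X i - X j) * β j) *ᵥ v) i =
      T (fun j => β j * v j) (X i) := fun v i => by
    simp [Matrix.mulVec, dotProduct, hT_apply, mul_assoc]
  constructor
  · rintro ⟨f, hf0, hf⟩
    have hfT : f = T fun j => β j * f (X j) := sub_eq_zero.1 <| hinj _ <| by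
      rw [smul_sub, map_sub, sub_sub_sub_comm, hf, hT, sub_self]
    refine ⟨fun i => f (X i), fun hv => hf0 ?_, funext fun i => ?_⟩
    · simpa [T, show ∀ j, f (X j) = 0 from congrFun hv] using hfT
    · rw [hmulVec, ← hfT]
  · rintro ⟨v, hv0, hv⟩
    have hTv : ∀ i, T (fun j => β j * v j) (X i) = v i := fun i => by rw [← hmulVec, hv]
    refine ⟨T fun j => β j * v j, fun h0 => hv0 (funext fun i => ?_), ?_⟩
    · simpa [h0] using (hTv i).symm
    · simp only [hT, hTv]

end Lattice

variable {d : ℕ}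

def phase (θ : Fin d → ℝ) : (Fin d → ℤ) →+ ℝ where
  toFun x := ∑ i, θ i * x i
  map_zero' := by simp
  map_add' x y := by simp [mul_add, Finset.sum_add_distrib]

def cube (d : ℕ) : Set (Fin d → ℝ) := Set.Icc (fun _ => -π) (fun _ => π)

theorem isCompact_cube : IsCompact (cube d) := isCompact_Icc

theorem _root_.Continuous.integrableOn_cube {E : Type*} [NormedAddCommGroup E]
    {f : (Fin d → ℝ) → E} (hf : Continuous f) : IntegrableOn f (cube d) :=
  hf.continuousOn.integrableOn_compact isCompact_cube

@[fun_prop]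
theorem continuous_phase (x : Fin d → ℤ) : Continuous fun θ : Fin d → ℝ => phase θ x := by
  simp only [phase, AddMonoidHom.coe_mk, ZeroHom.coe_mk]
  fun_prop

theorem intervalIntegral_exp_int_mul_I (k : ℤ) :
    ∫ t in -π..π, cexp (t * k * I) = if k = 0 then 2 * π else 0 := by
  split_ifs with hk
  · simp [hk]; ring
  have hk' : (k : ℝ) ≠ 0 := Int.cast_ne_zero.2 hk
  calc ∫ t in -π..π, cexp (t * k * I) = ∫ t in -π..π, cexp (↑((k : ℝ) * t) * I) := by
        congr 1; ext t; push_cast; ring_nf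
    _ = 0 := by
        rw [intervalIntegral.integral_comp_mul_left (fun s : ℝ => cexp (s * I)) hk',
          mul_neg, integral_exp_mul_I_eq_sin, Real.sin_int_mul_pi]
        simp

theorem integral_cube_exp_phase (x : Fin d → ℤ) :
    ∫ θ in cube d, cexp (phase θ x * I) = if x = 0 then ((2 * π) ^ d : ℝ) else 0 := by
  have hprod : ∀ θ : Fin d → ℝ, cexp (phase θ x * I) = ∏ i, cexp (θ i * x i * I) := fun θ => by
    rw [← Complex.exp_sum]
    simp [phase, Finset.sum_mul]
  simp_rw [hprod]
  rw [cube, ← Set.pi_univ_Icc, volume_pi, Measure.restrict_pi_pi,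
    integral_fintype_prod_eq_prod (f := fun i (t : ℝ) => cexp (t * x i * I))]
  simp_rw [integral_Icc_eq_integral_Ioc, ← intervalIntegral.integral_of_le
    (neg_le_self pi_pos.le), intervalIntegral_exp_int_mul_I]
  split_ifs with hx
  · simp [hx]
  · obtain ⟨i, hi⟩ := Function.ne_iff.1 hx
    exact Finset.prod_eq_zero (Finset.mem_univ i) (by simpa using hi)

theorem integral_cube_cos_phase (x : Fin d → ℤ) :
    ∫ θ in cube d, Real.cos (phase θ x) = if x = 0 then (2 * π) ^ d else 0 := by
  have hint : IntegrableOn (fun θ => cexp (phase θ x * I)) (cube d) :=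
    Continuous.integrableOn_cube (by fun_prop)
  have := congrArg re (integral_cube_exp_phase x)
  rw [← RCLike.re_to_complex, ← integral_re hint] at this
  simpa [Complex.exp_ofReal_mul_I_re, apply_ite re] using this

theorem inner_toLp_toLp {𝕜 α : Type*} [RCLike 𝕜] [MeasurableSpace α] {μ : Measure α}
    {f g : α → 𝕜} (hf : MemLp f 2 μ) (hg : MemLp g 2 μ) :
    inner 𝕜 (hf.toLp f) (hg.toLp g) = ∫ θ, conj (f θ) * g θ ∂μ := by
  rw [L2.inner_def]
  refine integral_congr_ae ?_
  filter_upwards [hf.coeFn_toLp, hg.coeFn_toLp] with θ hfθ hgθ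
  rw [hfθ, hgθ, RCLike.inner_apply']

instance : IsFiniteMeasure (volume.restrict (cube d)) :=
  isFiniteMeasure_restrict.2 isCompact_cube.measure_lt_top.ne

def character (x : Fin d → ℤ) (θ : Fin d → ℝ) : ℂ :=
  ((√((2 * π) ^ d))⁻¹ : ℝ) * cexp (phase θ x * I)

theorem continuous_character (x : Fin d → ℤ) : Continuous (character x) := by
  unfold character; fun_prop

theorem memLp_character (x : Fin d → ℤ) :
    MemLp (character x) 2 (volume.restrict (cube d)) :=
  MemLp.of_bound (continuous_character x).aestronglyMeasurable (√((2 * π) ^ d))⁻¹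
    (ae_of_all _ fun θ => by
      simp [character, Complex.norm_exp_ofReal_mul_I, abs_of_nonneg (Real.sqrt_nonneg _)])

theorem orthonormal_character :
    Orthonormal ℂ fun x : Fin d → ℤ => (memLp_character x).toLp (character x) := by
  rw [orthonormal_iff_ite]
  intro x y
  have hc : ((√((2 * π) ^ d))⁻¹ : ℝ) ^ 2 = ((2 * π) ^ d)⁻¹ := by
    rw [inv_pow, Real.sq_sqrt (by positivity)]
  have hprod : ∀ θ, conj (character x θ) * character y θ =
      (((2 * π) ^ d)⁻¹ : ℝ) * cexp (phase θ (y - x) * I) := fun θ => by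
    have hexp : conj (cexp (phase θ x * I)) * cexp (phase θ y * I) =
        cexp (phase θ (y - x) * I) := by
      rw [← Complex.exp_conj, ← Complex.exp_add, map_sub]
      simp only [map_mul, conj_ofReal, conj_I, ofReal_sub]
      ring_nf
    rw [← hc, ← hexp]
    simp only [character, map_mul, conj_ofReal, ofReal_pow]
    ring
  rw [inner_toLp_toLp, integral_congr_ae (ae_of_all _ hprod), integral_const_mul,
    integral_cube_exp_phase]
  by_cases h : x = y
  · simp [h]
  · simp [sub_eq_zero, Ne.symm h, h]

theorem summable_sq_integral_cos_phase_mul {w : (Fin d → ℝ) → ℝ}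
    (hw : MemLp w 2 (volume.restrict (cube d))) :
    Summable fun x : Fin d → ℤ => (∫ θ in cube d, Real.cos (phase θ x) * w θ) ^ 2 := by
  have hW : MemLp (fun θ => (w θ : ℂ)) 2 (volume.restrict (cube d)) := hw.ofReal
  set coeff := fun x => inner ℂ ((memLp_character x).toLp (character x)) (hW.toLp _)
  have hre : ∀ x, (coeff x).re = (√((2 * π) ^ d))⁻¹ * ∫ θ in cube d, Real.cos (phase θ x) * w θ :=
    fun x => by
      have hint : Integrable (fun θ => conj (character x θ) * w θ) (volume.restrict (cube d)) :=
        (memLp_character x).star.integrable_mul hW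
      simp only [coeff]
      rw [inner_toLp_toLp, ← RCLike.re_to_complex, ← integral_re hint, ← integral_const_mul]
      refine integral_congr_ae (ae_of_all _ fun θ => ?_)
      simp [character, ← Complex.exp_conj, ← neg_mul, ← ofReal_neg,
        Complex.exp_ofReal_mul_I_re, mul_assoc]
  refine ((orthonormal_character.inner_products_summable (hW.toLp _)).mul_left
    ((2 * π) ^ d)).of_nonneg_of_le (fun _ => sq_nonneg _) fun x => ?_
  have hpos : (0 : ℝ) < (2 * π) ^ d := by positivity
  calc (∫ θ in cube d, Real.cos (phase θ x) * w θ) ^ 2 = (2 * π) ^ d * (coeff x).re ^ 2 := by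
        rw [hre, mul_pow (√_)⁻¹, inv_pow, Real.sq_sqrt hpos.le, mul_inv_cancel_left₀ hpos.ne']
    _ ≤ (2 * π) ^ d * ‖coeff x‖ ^ 2 :=
        mul_le_mul_of_nonneg_left
          (sq_le_sq.2 ((Complex.abs_re_le_norm _).trans (le_abs_self _))) hpos.le

section Symbol

variable (a : (Fin d → ℤ) → ℝ)

/-- `symbol a` is the `φ` of the statement. -/
def symbol (θ : Fin d → ℝ) : ℝ := ∑' z, a z * Real.cos (phase θ z)

/-- `green a λ x` is the `I_x(λ)` of the statement. -/
def green (lam : ℝ) (x : Fin d → ℤ) : ℝ :=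
  ((2 * π) ^ d)⁻¹ * ∫ θ in cube d, Real.cos (phase θ x) / (lam - symbol a θ)

variable {a}

theorem green_neg (lam : ℝ) (x : Fin d → ℤ) : green a lam (-x) = green a lam x := by
  simp [green]

variable (hsum : Summable fun z => |a z|)
include hsum

theorem continuous_symbol : Continuous (symbol a) :=
  continuous_tsum (fun z => by fun_prop) hsum fun z θ => by
    rw [norm_mul, Real.norm_eq_abs]
    exact mul_le_of_le_one_right (abs_nonneg _) (Real.abs_cos_le_one _)

theorem symbol_nonpos (hnonneg : ∀ z, z ≠ 0 → 0 ≤ a z) (htot : ∑' z, a z = 0)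
    (θ : Fin d → ℝ) : symbol a θ ≤ 0 :=
  htot ▸ Summable.tsum_le_tsum (fun z => by
      rcases eq_or_ne z 0 with rfl | hz
      · simp
      · exact mul_le_of_le_one_right (hnonneg z hz) (Real.cos_le_one _))
    (summable_mul_of_abs_le hsum fun _ => Real.abs_cos_le_one _) (summable_abs_iff.1 hsum)

theorem tsum_mul_cos_phase_sub (hsymm : ∀ z, a z = a (-z)) (θ : Fin d → ℝ)
    (x : Fin d → ℤ) :
    ∑' x', a (x - x') * Real.cos (phase θ x') = symbol a θ * Real.cos (phase θ x) := by
  have hcos := summable_mul_of_abs_le hsum fun z => Real.abs_cos_le_one (phase θ z)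
  have hsin := summable_mul_of_abs_le hsum fun z => Real.abs_sin_le_one (phase θ z)
  -- the odd part vanishes because `a` is even
  have hodd : ∑' z, a z * Real.sin (phase θ z) = 0 := by
    refine CharZero.eq_neg_self_iff.1 ?_
    rw [← tsum_neg, ← (Equiv.neg _).tsum_eq]
    simp [← hsymm]
  rw [← (Equiv.subLeft x).tsum_eq]
  simp only [Equiv.subLeft_apply, sub_sub_cancel, map_sub, Real.cos_sub, mul_add,
    mul_left_comm (a _)]
  rw [Summable.tsum_add (hcos.mul_left _) (hsin.mul_left _), tsum_mul_left, tsum_mul_left, hodd,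
    symbol, mul_zero, add_zero, mul_comm]

theorem tsum_mul_integral_cos_phase_mul (hsymm : ∀ z, a z = a (-z))
    {w : (Fin d → ℝ) → ℝ} (hw : Continuous w) {C : ℝ} (hC : ∀ θ, |w θ| ≤ C) (x : Fin d → ℤ) :
    ∑' x', a (x - x') * ∫ θ in cube d, Real.cos (phase θ x') * w θ =
      ∫ θ in cube d, symbol a θ * Real.cos (phase θ x) * w θ := by
  simp_rw [← integral_const_mul]
  -- each term is bounded by `|a (x - x')| * C`, so the sum may be taken under the integral
  rw [integral_tsum_of_summable_integral_norm fun x' => Continuous.integrableOn_cube (by fun_prop)]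
  · congr 1
    ext θ
    simp_rw [← mul_assoc, tsum_mul_right, tsum_mul_cos_phase_sub hsum hsymm]
  · refine Summable.of_nonneg_of_le (fun _ => integral_nonneg fun _ => norm_nonneg _)
      (fun x' => (Real.le_norm_self _).trans (norm_setIntegral_le_of_norm_le_const
        (C := |a (x - x')| * C) isCompact_cube.measure_lt_top fun θ _ => ?_))
      ((((Equiv.subLeft x).summable_iff.2 hsum).mul_right C).mul_right (volume.real (cube d)))
    rw [norm_norm, norm_mul, norm_mul, Real.norm_eq_abs, Real.norm_eq_abs, Real.norm_eq_abs]
    exact mul_le_mul_of_nonneg_left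
      ((mul_le_of_le_one_left (abs_nonneg _) (Real.abs_cos_le_one _)).trans (hC θ)) (abs_nonneg _)

variable (hnonneg : ∀ z, z ≠ 0 → 0 ≤ a z) (htot : ∑' z, a z = 0) {lam : ℝ} (hlam : 0 < lam)
include hnonneg htot hlam

theorem sub_symbol_pos (θ : Fin d → ℝ) : 0 < lam - symbol a θ := by
  linarith [symbol_nonpos hsum hnonneg htot θ]

theorem abs_inv_sub_symbol_le (θ : Fin d → ℝ) : |(lam - symbol a θ)⁻¹| ≤ lam⁻¹ := by
  have hpos := sub_symbol_pos hsum hnonneg htot hlam θ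
  rw [abs_inv, abs_of_pos hpos]
  exact inv_anti₀ hlam (by linarith [symbol_nonpos hsum hnonneg htot θ])

theorem continuous_inv_sub_symbol : Continuous fun θ => (lam - symbol a θ)⁻¹ :=
  (continuous_const.sub (continuous_symbol hsum)).inv₀ fun θ =>
    (sub_symbol_pos hsum hnonneg htot hlam θ).ne'

theorem memℓp_green : Memℓp (green a lam) 2 := by
  have hw : MemLp (fun θ => (lam - symbol a θ)⁻¹) 2 (volume.restrict (cube d)) :=
    MemLp.of_bound (continuous_inv_sub_symbol hsum hnonneg htot hlam).aestronglyMeasurable lam⁻¹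
      (ae_of_all _ (abs_inv_sub_symbol_le hsum hnonneg htot hlam))
  rw [memℓp_two_iff_summable_sq]
  refine ((summable_sq_integral_cos_phase_mul hw).mul_left (((2 * π) ^ d)⁻¹ ^ 2)).congr
    fun x => ?_
  simp [green, div_eq_mul_inv, mul_pow]

theorem green_resolvent (hsymm : ∀ z, a z = a (-z)) (x : Fin d → ℤ) :
    lam * green a lam x - ∑' x', a (x - x') * green a lam x' = if x = 0 then 1 else 0 := by
  set w := fun θ => (lam - symbol a θ)⁻¹
  have hw : Continuous w := continuous_inv_sub_symbol hsum hnonneg htot hlam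
  have hgreen : ∀ x, green a lam x = ((2 * π) ^ d)⁻¹ * ∫ θ in cube d, Real.cos (phase θ x) * w θ :=
    fun x => by simp [green, div_eq_mul_inv, w]
  have hcancel : ∀ θ, lam * (Real.cos (phase θ x) * w θ) - symbol a θ * Real.cos (phase θ x) * w θ
      = Real.cos (phase θ x) := fun θ => by
    have := (sub_symbol_pos hsum hnonneg htot hlam θ).ne'
    simp only [w]
    field_simp
  calc lam * green a lam x - ∑' x', a (x - x') * green a lam x'
      = ((2 * π) ^ d)⁻¹ * ∫ θ in cube d,
          (lam * (Real.cos (phase θ x) * w θ) - symbol a θ * Real.cos (phase θ x) * w θ) := by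
        simp_rw [hgreen, mul_left_comm (a _), tsum_mul_left, tsum_mul_integral_cos_phase_mul hsum
          hsymm hw (abs_inv_sub_symbol_le hsum hnonneg htot hlam)]
        have hφ := continuous_symbol hsum
        rw [integral_sub (Continuous.integrableOn_cube (by fun_prop))
          (Continuous.integrableOn_cube (by fun_prop)), integral_const_mul]
        ring
    _ = if x = 0 then 1 else 0 := by
        simp_rw [hcancel, integral_cube_cos_phase]
        split_ifs <;> simp

end Symbol

end PointInteraction

open PointInteraction in
theorem eigenvalue_iff_det_general (d : ℕ) (a : (Fin d → ℤ) → ℝ)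
    (hsymm : ∀ z, a z = a (-z))
    (hnonneg : ∀ z, z ≠ 0 → 0 ≤ a z)
    (hsum : Summable fun z => |a z|)
    (htot : ∑' z, a z = 0)
    (A : lp (fun _ : Fin d → ℤ => ℝ) 2 →L[ℝ] lp (fun _ : Fin d → ℤ => ℝ) 2)
    (hA : ∀ (u : lp (fun _ : Fin d → ℤ => ℝ) 2) (x : Fin d → ℤ),
      A u x = ∑' x' : Fin d → ℤ, a (x - x') * u x')
    (N : ℕ) (X : Fin N → Fin d → ℤ)
    (β : Fin N → ℝ)
    (H : lp (fun _ : Fin d → ℤ => ℝ) 2 →L[ℝ] lp (fun _ : Fin d → ℤ => ℝ) 2)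
    (hH : ∀ (u : lp (fun _ : Fin d → ℤ => ℝ) 2) (x : Fin d → ℤ),
      H u x = A u x + ∑ j : Fin N, if x = X j then β j * u x else 0)
    (phi : (Fin d → ℝ) → ℝ)
    (hphi : ∀ θ, phi θ = ∑' z : Fin d → ℤ, a z * Real.cos (∑ i, θ i * (z i : ℝ)))
    (I : ℝ → (Fin d → ℤ) → ℝ)
    (hI : ∀ (lam : ℝ) (x : Fin d → ℤ), I lam x = ((2 * Real.pi) ^ d)⁻¹ *
      ∫ θ in Set.Icc (fun _ : Fin d => -Real.pi) (fun _ : Fin d => Real.pi),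
        Real.cos (∑ i, θ i * (x i : ℝ)) / (lam - phi θ))
    (G : ℝ → Matrix (Fin N) (Fin N) ℝ)
    (hG : ∀ (lam : ℝ) (i j : Fin N), G lam i j = β j * I lam (X j - X i))
    (lam : ℝ) (hlam : 0 < lam) :
    (∃ f : lp (fun _ : Fin d → ℤ => ℝ) 2, f ≠ 0 ∧ H f = lam • f) ↔
      Matrix.det (G lam - 1) = 0 := by
  have hI' : I lam = green a lam := funext fun x => by
    rw [hI, funext hphi]
    rfl
  have hG' : G lam = Matrix.of fun i j => green a lam (X i - X j) * β j := by
    ext i j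
    rw [hG, hI', ← neg_sub, green_neg, mul_comm, Matrix.of_apply]
  have hHA : ∀ f, H f = A f + ∑ j, lp.single 2 (X j) (β j * f (X j)) := fun f => by
    ext x
    simp only [hH, lp.coeFn_add, lp.coeFn_sum, Pi.add_apply, Finset.sum_apply, lp.coeFn_single,
      Pi.single_apply]
    congr 1
    refine Finset.sum_congr rfl fun j _ => ?_
    split_ifs with hx <;> simp [hx]
  simp_rw [hHA, eq_comm (a := A _ + _), ← sub_eq_iff_eq_add']
  rw [exists_eigenvector_iff A hA (green_resolvent hsum hnonneg htot hlam hsymm) hnonneg hsum htot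
    hlam (memℓp_green hsum hnonneg htot hlam) X β, hG', ← Matrix.exists_mulVec_eq_zero_iff]
  simp [Matrix.sub_mulVec, sub_eq_zero]

/-- `λ > 0` is an eigenvalue of `H` iff `det (G(λ) - I) = 0`, where
`G(λ)_{ij} = β_j I_{x_j - x_i}(λ)`. -/
theorem eigenvalue_iff_det (d : ℕ) (hd : 1 ≤ d) (a : (Fin d → ℤ) → ℝ)
    (hsymm : ∀ z, a z = a (-z))
    (hnonneg : ∀ z, z ≠ 0 → 0 ≤ a z)
    (hneg : a 0 < 0)
    (hsum : Summable fun z => |a z|)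
    (htot : ∑' z, a z = 0)
    (hirr : ∀ z : Fin d → ℤ, ∃ (k : ℕ) (zs : Fin k → Fin d → ℤ),
      z = ∑ i, zs i ∧ ∀ i, a (zs i) ≠ 0)
    (A : lp (fun _ : Fin d → ℤ => ℝ) 2 →L[ℝ] lp (fun _ : Fin d → ℤ => ℝ) 2)
    (hA : ∀ (u : lp (fun _ : Fin d → ℤ => ℝ) 2) (x : Fin d → ℤ),
      A u x = ∑' x' : Fin d → ℤ, a (x - x') * u x')
    (N : ℕ) (hN : 1 ≤ N) (X : Fin N → Fin d → ℤ) (hX : Function.Injective X)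
    (β : Fin N → ℝ) (hβ : ∀ j, 0 < β j)
    (H : lp (fun _ : Fin d → ℤ => ℝ) 2 →L[ℝ] lp (fun _ : Fin d → ℤ => ℝ) 2)
    (hH : ∀ (u : lp (fun _ : Fin d → ℤ => ℝ) 2) (x : Fin d → ℤ),
      H u x = A u x + ∑ j : Fin N, if x = X j then β j * u x else 0)
    (phi : (Fin d → ℝ) → ℝ)
    (hphi : ∀ θ, phi θ = ∑' z : Fin d → ℤ, a z * Real.cos (∑ i, θ i * (z i : ℝ)))
    (I : ℝ → (Fin d → ℤ) → ℝ)
    (hI : ∀ (lam : ℝ) (x : Fin d → ℤ), I lam x = ((2 * Real.pi) ^ d)⁻¹ *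
      ∫ θ in Set.Icc (fun _ : Fin d => -Real.pi) (fun _ : Fin d => Real.pi),
        Real.cos (∑ i, θ i * (x i : ℝ)) / (lam - phi θ))
    (G : ℝ → Matrix (Fin N) (Fin N) ℝ)
    (hG : ∀ (lam : ℝ) (i j : Fin N), G lam i j = β j * I lam (X j - X i))
    (lam : ℝ) (hlam : 0 < lam) :
    (∃ f : lp (fun _ : Fin d → ℤ => ℝ) 2, f ≠ 0 ∧ H f = lam • f) ↔
      Matrix.det (G lam - 1) = 0 :=
  eigenvalue_iff_det_general d a hsymm hnonneg hsum htot A hA N X β H hH phi hphi I hI G hG lam hlam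
end
end

section
/- The largest eigenvalue γ(λ) of the matrix G(λ), which (by the Perron–Frobenius theorem, G(λ) having strictly positive entries) equals the spectral radius of G(λ), is a continuous and strictly decreasing function of λ on (0, ∞): for all 0 < λ'' < λ' one has γ(λ') < γ(λ''), and λ ↦ γ(λ) is continuous on (0, ∞). -/
/-!
Since `a ≥ 0` off the origin and `∑ a = 0`, the symbol `φ` is continuous and `φ ≤ 0`, so for
`λ > 0` the weight `w_λ = (λ - φ)⁻¹` is continuous and positive. For a continuous weight `w ≥ 0`
the matrix of Fourier coefficients `(ŵ(x_j - x_i))_{ij}` is positive semidefinite, its quadratic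
form being `∫ |∑ c_i e^{iθ·x_i}|² w`, and the weight `1` gives the identity matrix because the
`x_i` are distinct; hence `w ↦ (ŵ(x_j - x_i))` is monotone for the Loewner order. Conjugating by
`diag √β` turns `G(λ)` into the symmetric matrix `diag √β · (ŵ_λ(x_j - x_i)) · diag √β` with the
same characteristic polynomial, so `γ(λ)` is the largest eigenvalue of the latter, and the largest
eigenvalue is Loewner-monotone. For `λ'' < λ'` the difference `w_λ'' - w_λ'` is bounded below by
a positive constant on the compact cube, giving strict decrease, and `|w_λ - w_μ| ≤ |λ - μ| / m²`
for `λ, μ ≥ m` gives local Lipschitz continuity.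
-/

open MeasureTheory ENNReal
open Real Matrix
open scoped MatrixOrder

namespace Matrix

variable {n : Type*} [Fintype n] [DecidableEq n]

theorem spectrum_eq_of_charpoly_eq {K : Type*} [Field K] {A B : Matrix n n K}
    (h : A.charpoly = B.charpoly) : spectrum K A = spectrum K B := by
  ext r
  rw [mem_spectrum_iff_isRoot_charpoly, mem_spectrum_iff_isRoot_charpoly, h]

theorem IsHermitian.spectrum_map_ofReal {A : Matrix n n ℝ} (hA : A.IsHermitian) :
    spectrum ℂ (A.map fun r => (r : ℂ)) = Complex.ofReal '' spectrum ℝ A := by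
  have hmem (t : ℝ) : (t : ℂ) ∈ spectrum ℂ (A.map fun r => (r : ℂ)) ↔ t ∈ spectrum ℝ A := by
    rw [mem_spectrum_iff_isRoot_charpoly, mem_spectrum_iff_isRoot_charpoly,
      show (A.map fun r => (r : ℂ)) = A.map Complex.ofRealHom from rfl, charpoly_map]
    exact Polynomial.isRoot_map_iff Complex.ofReal_injective
  have hAC : (A.map fun r => (r : ℂ)).IsHermitian := hA.map _ fun _ => (Complex.conj_ofReal _).symm
  ext z
  constructor
  · intro hz
    obtain ⟨t, -, rfl⟩ := hAC.spectrum_eq_image_range ▸ hz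
    exact ⟨t, (hmem t).1 hz, rfl⟩
  · rintro ⟨t, ht, rfl⟩
    exact (hmem t).2 ht

theorem diagonal_le_algebraMap_iff {v : n → ℝ} {c : ℝ} :
    diagonal v ≤ algebraMap ℝ (Matrix n n ℝ) c ↔ ∀ i, v i ≤ c := by
  rw [le_iff, algebraMap_eq_diagonal, diagonal_sub, posSemidef_diagonal_iff]
  simp [sub_nonneg]

theorem diagonal_mul_mul_diagonal_le_add_algebraMap {A B : Matrix n n ℝ} {δ c : ℝ} (s : n → ℝ)
    (hAB : A ≤ B + algebraMap ℝ _ δ) (hc : ∀ i, δ * s i ^ 2 ≤ c) :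
    diagonal s * A * diagonal s ≤ diagonal s * B * diagonal s + algebraMap ℝ _ c := by
  have hstar : star (diagonal s) = diagonal s := by
    rw [star_eq_conjTranspose, diagonal_conjTranspose, star_trivial]
  have hconj := star_left_conjugate_le_conjugate hAB (diagonal s)
  rw [hstar, mul_add, add_mul, algebraMap_eq_diagonal, diagonal_mul_diagonal,
    diagonal_mul_diagonal] at hconj
  refine hconj.trans (add_le_add le_rfl (diagonal_le_algebraMap_iff.2 fun i => ?_))
  have := hc i
  simp only [Pi.algebraMap_apply, Algebra.algebraMap_self, RingHom.id_apply]
  linarith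

theorem charpoly_mul_diagonal_mul_self {R : Type*} [CommRing R] (A : Matrix n n R) (s : n → R) :
    (A * diagonal (s * s)).charpoly = (diagonal s * A * diagonal s).charpoly := by
  rw [show diagonal (s * s) = diagonal s * diagonal s from (diagonal_mul_diagonal s s).symm,
    ← mul_assoc, charpoly_mul_comm, ← mul_assoc]

theorem spectralRadius_map_ofReal_eq_of_charpoly_eq {A B : Matrix n n ℝ}
    (h : A.charpoly = B.charpoly) :
    spectralRadius ℂ (A.map fun r => (r : ℂ)) = spectralRadius ℂ (B.map fun r => (r : ℂ)) := by
  have hC : (A.map Complex.ofRealHom).charpoly = (B.map Complex.ofRealHom).charpoly := by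
    rw [charpoly_map, charpoly_map, h]
  exact congrArg (fun S => ⨆ z ∈ S, (‖z‖₊ : ℝ≥0∞)) (spectrum_eq_of_charpoly_eq hC)

variable [Nonempty n]

theorem IsHermitian.sSup_spectrum_mem {A : Matrix n n ℝ} (hA : A.IsHermitian) :
    sSup (spectrum ℝ A) ∈ spectrum ℝ A :=
  Set.Nonempty.csSup_mem (hA.spectrum_real_eq_range_eigenvalues ▸ Set.range_nonempty _)
    A.finite_real_spectrum

theorem IsHermitian.le_algebraMap_iff_sSup_spectrum_le {A : Matrix n n ℝ} (hA : A.IsHermitian)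
    {r : ℝ} : A ≤ algebraMap ℝ _ r ↔ sSup (spectrum ℝ A) ≤ r := by
  rw [le_algebraMap_iff_spectrum_le hA,
    csSup_le_iff A.finite_real_spectrum.bddAbove ⟨_, hA.sSup_spectrum_mem⟩]

theorem IsHermitian.sSup_spectrum_le_add_of_le {A B : Matrix n n ℝ} (hA : A.IsHermitian)
    (hB : B.IsHermitian) {δ : ℝ} (h : A ≤ B + algebraMap ℝ _ δ) :
    sSup (spectrum ℝ A) ≤ sSup (spectrum ℝ B) + δ := by
  rw [← hA.le_algebraMap_iff_sSup_spectrum_le, map_add]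
  calc A ≤ B + algebraMap ℝ _ δ := h
    _ ≤ _ := add_le_add_left ((hB.le_algebraMap_iff_sSup_spectrum_le).2 le_rfl) _

theorem PosSemidef.toReal_spectralRadius_map_ofReal {A : Matrix n n ℝ} (hA : A.PosSemidef) :
    (spectralRadius ℂ (A.map fun r => (r : ℂ))).toReal = sSup (spectrum ℝ A) := by
  have hnonneg : ∀ t ∈ spectrum ℝ A, 0 ≤ t := by
    intro t ht
    rw [hA.1.spectrum_real_eq_range_eigenvalues] at ht
    obtain ⟨i, rfl⟩ := ht
    exact hA.eigenvalues_nonneg i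
  have hnorm : ∀ t ∈ spectrum ℝ A, (‖(t : ℂ)‖₊ : ℝ≥0∞) = ENNReal.ofReal t := fun t ht => by
    rw [← enorm_eq_nnnorm, ← ofReal_norm, Complex.norm_real, Real.norm_of_nonneg (hnonneg t ht)]
  rw [← ENNReal.toReal_ofReal (Real.sSup_nonneg hnonneg), spectralRadius,
    hA.1.spectrum_map_ofReal, iSup_image]
  congr 1
  refine le_antisymm (iSup₂_le fun t ht => ?_) ?_
  · rw [hnorm t ht]
    exact ENNReal.ofReal_le_ofReal (le_csSup A.finite_real_spectrum.bddAbove ht)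
  · have hmem := hA.1.sSup_spectrum_mem
    exact le_iSup₂_of_le _ hmem (hnorm _ hmem).ge

end Matrix

section Symbol

variable {d : ℕ} {a : (Fin d → ℤ) → ℝ}

theorem norm_mul_cos_le (r t : ℝ) : ‖r * cos t‖ ≤ |r| := by
  rw [Real.norm_eq_abs, abs_mul]
  exact mul_le_of_le_one_right (abs_nonneg _) (abs_cos_le_one _)

theorem summable_mul_cos (ha : Summable fun z => |a z|) (θ : Fin d → ℝ) :
    Summable fun z => a z * cos (∑ k, θ k * (z k : ℝ)) :=
  ha.of_norm_bounded fun _ => norm_mul_cos_le _ _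

theorem continuous_tsum_mul_cos (ha : Summable fun z => |a z|) :
    Continuous fun θ : Fin d → ℝ => ∑' z, a z * cos (∑ k, θ k * (z k : ℝ)) :=
  continuous_tsum (fun _ => by fun_prop) ha fun _ _ => norm_mul_cos_le _ _

theorem tsum_mul_cos_nonpos (hnonneg : ∀ z, z ≠ 0 → 0 ≤ a z) (ha : Summable fun z => |a z|)
    (htot : ∑' z, a z = 0) (θ : Fin d → ℝ) : ∑' z, a z * cos (∑ k, θ k * (z k : ℝ)) ≤ 0 := by
  refine htot ▸ (summable_mul_cos ha θ).tsum_le_tsum (fun z => ?_) ha.of_abs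
  rcases eq_or_ne z 0 with rfl | hz
  · simp
  · exact mul_le_of_le_one_right (hnonneg z hz) (cos_le_one _)

end Symbol

theorem integral_Icc_exp_int_mul_I (m : ℤ) :
    ∫ t in Set.Icc (-π) π, Complex.exp (t * m * Complex.I) = if m = 0 then 2 * π else 0 := by
  rw [integral_Icc_eq_integral_Ioc, ← intervalIntegral.integral_of_le (by linarith [pi_pos])]
  rcases eq_or_ne m 0 with rfl | hm
  · simp [two_mul]
  have hmI : (m : ℂ) * Complex.I ≠ 0 := by simp [hm]
  simp_rw [mul_assoc, mul_comm _ ((m : ℂ) * Complex.I)]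
  rw [integral_exp_mul_complex hmI, if_neg hm]
  have hperiod : Complex.exp (m * Complex.I * π) = Complex.exp (m * Complex.I * (-π : ℝ)) := by
    rw [show (m : ℂ) * Complex.I * π = m * (2 * π * Complex.I) + m * Complex.I * (-π : ℝ) by
      push_cast; ring, Complex.exp_add, Complex.exp_int_mul_two_pi_mul_I, one_mul]
  rw [hperiod, sub_self, zero_div, Complex.ofReal_zero]

def torusCube (d : ℕ) : Set (Fin d → ℝ) := Set.Icc (fun _ => -π) (fun _ => π)

theorem integral_torusCube_exp (d : ℕ) (z : Fin d → ℤ) :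
    ∫ θ in torusCube d, Complex.exp ((∑ k, θ k * (z k : ℝ) : ℝ) * Complex.I) =
      if z = 0 then ((2 * π) ^ d : ℝ) else 0 := by
  have hprod : ∀ θ : Fin d → ℝ, Complex.exp ((∑ k, θ k * (z k : ℝ) : ℝ) * Complex.I) =
      ∏ k, Complex.exp (θ k * z k * Complex.I) := fun θ => by
    rw [← Complex.exp_sum]; push_cast; rw [Finset.sum_mul]
  simp_rw [hprod]
  rw [torusCube, ← Set.pi_univ_Icc, volume_pi, Measure.restrict_pi_pi,
    integral_fintype_prod_eq_prod
      (f := fun (k : Fin d) (t : ℝ) => Complex.exp (t * z k * Complex.I))]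
  simp_rw [integral_Icc_exp_int_mul_I]
  rw [← Complex.ofReal_prod, Finset.prod_ite_zero, Finset.prod_const, Finset.card_univ,
    Fintype.card_fin]
  simp only [funext_iff, Finset.mem_univ, true_implies, Pi.zero_apply]

theorem integral_torusCube_cos (d : ℕ) (z : Fin d → ℤ) :
    ∫ θ in torusCube d, cos (∑ k, θ k * (z k : ℝ)) = if z = 0 then (2 * π) ^ d else 0 := by
  have hre := integral_re (𝕜 := ℂ) (μ := volume.restrict (torusCube d))
    (f := fun θ => Complex.exp ((∑ k, θ k * (z k : ℝ) : ℝ) * Complex.I))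
    (Continuous.integrableOn_Icc (by fun_prop))
  simp only [RCLike.re_to_complex, Complex.exp_ofReal_mul_I_re] at hre
  rw [hre, integral_torusCube_exp, Complex.ofReal_re]

section FourierMatrix

variable {d : ℕ} {ι : Type*}

noncomputable def fourierMatrix (x : ι → Fin d → ℤ) (w : (Fin d → ℝ) → ℝ) : Matrix ι ι ℝ :=
  of fun i j => ((2 * π) ^ d)⁻¹ *
    ∫ θ in torusCube d, cos (∑ k, θ k * ((x j - x i) k : ℝ)) * w θ

theorem sum_mul_intCast_sub (θ : Fin d → ℝ) (z z' : Fin d → ℤ) :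
    ∑ k, θ k * ((z - z') k : ℝ) = ∑ k, θ k * (z k : ℝ) - ∑ k, θ k * (z' k : ℝ) := by
  simp only [Pi.sub_apply, Int.cast_sub, mul_sub, Finset.sum_sub_distrib]

theorem sum_sum_mul_cos_sub [Fintype ι] (c u : ι → ℝ) :
    ∑ i, ∑ j, c i * c j * cos (u j - u i) =
      (∑ i, c i * cos (u i)) ^ 2 + (∑ i, c i * sin (u i)) ^ 2 := by
  simp_rw [cos_sub, sq, Finset.sum_mul_sum, ← Finset.sum_add_distrib]
  exact Finset.sum_congr rfl fun i _ => Finset.sum_congr rfl fun j _ => by ring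

theorem integrableOn_torusCube_cos_mul {w : (Fin d → ℝ) → ℝ} (hw : Continuous w) (z : Fin d → ℤ) :
    IntegrableOn (fun θ => cos (∑ k, θ k * (z k : ℝ)) * w θ) (torusCube d) :=
  Continuous.integrableOn_Icc (by fun_prop)

theorem fourierMatrix_isHermitian (x : ι → Fin d → ℤ) (w : (Fin d → ℝ) → ℝ) :
    (fourierMatrix x w).IsHermitian := by
  ext i j
  simp only [conjTranspose_apply, star_trivial, fourierMatrix, of_apply, sum_mul_intCast_sub]
  congr 2 with θ
  rw [← cos_neg, neg_sub]

theorem dotProduct_fourierMatrix_mulVec [Fintype ι] (x : ι → Fin d → ℤ) {w : (Fin d → ℝ) → ℝ}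
    (hw : Continuous w) (c : ι → ℝ) :
    c ⬝ᵥ fourierMatrix x w *ᵥ c = ((2 * π) ^ d)⁻¹ * ∫ θ in torusCube d,
      ((∑ i, c i * cos (∑ k, θ k * (x i k : ℝ))) ^ 2 +
        (∑ i, c i * sin (∑ k, θ k * (x i k : ℝ))) ^ 2) * w θ := by
  have hint : ∀ i j, Integrable (fun θ => c i * c j * (cos (∑ k, θ k * ((x j - x i) k : ℝ)) *
      w θ)) (volume.restrict (torusCube d)) := fun i j =>
    (integrableOn_torusCube_cos_mul hw _).const_mul _
  calc c ⬝ᵥ fourierMatrix x w *ᵥ c = ∑ i, ∑ j, c i * c j * fourierMatrix x w i j := by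
        simp only [dotProduct, mulVec, Finset.mul_sum]
        exact Finset.sum_congr rfl fun i _ => Finset.sum_congr rfl fun j _ => by ring
    _ = ((2 * π) ^ d)⁻¹ * ∫ θ in torusCube d, ∑ i, ∑ j,
          c i * c j * (cos (∑ k, θ k * ((x j - x i) k : ℝ)) * w θ) := by
        rw [integral_finsetSum _ fun i _ => integrable_finsetSum _ fun j _ => hint i j]
        simp only [integral_finsetSum _ fun j _ => hint _ j, integral_const_mul, fourierMatrix,
          of_apply, Finset.mul_sum]
        exact Finset.sum_congr rfl fun i _ => Finset.sum_congr rfl fun j _ => by ring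
    _ = _ := by
        congr 2 with θ
        rw [← sum_sum_mul_cos_sub, Finset.sum_mul]
        simp only [sum_mul_intCast_sub, Finset.sum_mul]
        exact Finset.sum_congr rfl fun i _ => Finset.sum_congr rfl fun j _ => by ring

theorem fourierMatrix_posSemidef [Fintype ι] (x : ι → Fin d → ℤ) {w : (Fin d → ℝ) → ℝ}
    (hw : Continuous w) (hw0 : ∀ θ ∈ torusCube d, 0 ≤ w θ) : (fourierMatrix x w).PosSemidef := by
  refine .of_dotProduct_mulVec_nonneg (fourierMatrix_isHermitian x w) fun c => ?_
  rw [star_trivial, dotProduct_fourierMatrix_mulVec x hw]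
  exact mul_nonneg (by positivity) <| setIntegral_nonneg measurableSet_Icc fun θ hθ =>
    mul_nonneg (by positivity) (hw0 θ hθ)

theorem fourierMatrix_add (x : ι → Fin d → ℤ) {w w' : (Fin d → ℝ) → ℝ} (hw : Continuous w)
    (hw' : Continuous w') : fourierMatrix x (w + w') = fourierMatrix x w + fourierMatrix x w' := by
  ext i j
  simp only [fourierMatrix, of_apply, Matrix.add_apply, Pi.add_apply, mul_add,
    integral_add (integrableOn_torusCube_cos_mul hw _) (integrableOn_torusCube_cos_mul hw' _)]

theorem fourierMatrix_sub (x : ι → Fin d → ℤ) {w w' : (Fin d → ℝ) → ℝ} (hw : Continuous w)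
    (hw' : Continuous w') : fourierMatrix x (w - w') = fourierMatrix x w - fourierMatrix x w' := by
  ext i j
  simp only [fourierMatrix, of_apply, Matrix.sub_apply, Pi.sub_apply, mul_sub,
    integral_sub (integrableOn_torusCube_cos_mul hw _) (integrableOn_torusCube_cos_mul hw' _)]

theorem fourierMatrix_const [Fintype ι] [DecidableEq ι] {x : ι → Fin d → ℤ}
    (hx : Function.Injective x) (c : ℝ) :
    fourierMatrix x (fun _ => c) = algebraMap ℝ (Matrix ι ι ℝ) c := by
  ext i j
  simp only [fourierMatrix, of_apply, algebraMap_matrix_apply, integral_mul_const,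
    integral_torusCube_cos, sub_eq_zero, hx.eq_iff, eq_comm (a := j), Algebra.algebraMap_self,
    RingHom.id_apply]
  split_ifs <;> simp

theorem fourierMatrix_le_add_algebraMap [Fintype ι] [DecidableEq ι] {x : ι → Fin d → ℤ}
    (hx : Function.Injective x) {w w' : (Fin d → ℝ) → ℝ} (hw : Continuous w) (hw' : Continuous w')
    {c : ℝ} (hle : ∀ θ ∈ torusCube d, w θ ≤ w' θ + c) :
    fourierMatrix x w ≤ fourierMatrix x w' + algebraMap ℝ (Matrix ι ι ℝ) c := by
  have hcont : Continuous (w' + fun _ => c) := hw'.add continuous_const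
  rw [le_iff, ← fourierMatrix_const hx, ← fourierMatrix_add x hw' continuous_const,
    ← fourierMatrix_sub x hcont hw]
  exact fourierMatrix_posSemidef x (hcont.sub hw) fun θ hθ => sub_nonneg.2 (hle θ hθ)

end FourierMatrix

theorem inv_le_inv_add_abs_sub_div_sq {m a b : ℝ} (hm : 0 < m) (ha : m ≤ a) (hb : m ≤ b) :
    a⁻¹ ≤ b⁻¹ + |a - b| / m ^ 2 := by
  have ha0 : 0 < a := hm.trans_le ha
  have hb0 : 0 < b := hm.trans_le hb
  have hdiff : a⁻¹ - b⁻¹ = (b - a) / (a * b) := by field_simp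
  have hbound : (b - a) / (a * b) ≤ |a - b| / m ^ 2 :=
    div_le_div₀ (abs_nonneg _) (abs_sub_comm a b ▸ le_abs_self _) (by positivity)
      (by nlinarith)
  linarith

section Resolvent

variable {d : ℕ} {ι : Type*} [Fintype ι] [DecidableEq ι] {φ : (Fin d → ℝ) → ℝ}
  {x : ι → Fin d → ℤ} {s : ι → ℝ}

/-- With `s = √β` this is `diag(√β) * G(λ) * diag(√β)⁻¹`, a symmetric matrix with the spectrum
of `G(λ)`. -/
noncomputable def resolventMatrix (φ : (Fin d → ℝ) → ℝ) (x : ι → Fin d → ℤ) (s : ι → ℝ)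
    (lam : ℝ) : Matrix ι ι ℝ :=
  diagonal s * fourierMatrix x (fun θ => (lam - φ θ)⁻¹) * diagonal s

theorem continuous_inv_sub (hφ : Continuous φ) (hφ0 : ∀ θ, φ θ ≤ 0) {lam : ℝ} (hlam : 0 < lam) :
    Continuous fun θ => (lam - φ θ)⁻¹ :=
  (continuous_const.sub hφ).inv₀ fun θ => (by linarith [hφ0 θ] : 0 < lam - φ θ).ne'

theorem resolventMatrix_posSemidef (hφ : Continuous φ) (hφ0 : ∀ θ, φ θ ≤ 0) {lam : ℝ}
    (hlam : 0 < lam) : (resolventMatrix φ x s lam).PosSemidef := by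
  have hM := fourierMatrix_posSemidef x (continuous_inv_sub hφ hφ0 hlam) fun θ _ =>
    inv_nonneg.2 (by linarith [hφ0 θ] : 0 ≤ lam - φ θ)
  simpa [resolventMatrix, diagonal_conjTranspose] using hM.conjTranspose_mul_mul_same (diagonal s)

theorem resolventMatrix_le_add_algebraMap (hx : Function.Injective x) (hφ : Continuous φ)
    (hφ0 : ∀ θ, φ θ ≤ 0) {lam lam' δ c : ℝ} (hlam : 0 < lam) (hlam' : 0 < lam')
    (hle : ∀ θ ∈ torusCube d, (lam - φ θ)⁻¹ ≤ (lam' - φ θ)⁻¹ + δ) (hc : ∀ i, δ * s i ^ 2 ≤ c) :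
    resolventMatrix φ x s lam ≤ resolventMatrix φ x s lam' + algebraMap ℝ _ c :=
  diagonal_mul_mul_diagonal_le_add_algebraMap s (fourierMatrix_le_add_algebraMap hx
    (continuous_inv_sub hφ hφ0 hlam) (continuous_inv_sub hφ hφ0 hlam') hle) hc

variable [Nonempty ι]

theorem strictAntiOn_sSup_spectrum_resolventMatrix (hx : Function.Injective x)
    (hφ : Continuous φ) (hφ0 : ∀ θ, φ θ ≤ 0) (hs : ∀ i, s i ≠ 0) :
    StrictAntiOn (fun lam => sSup (spectrum ℝ (resolventMatrix φ x s lam))) (Set.Ioi 0) := by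
  intro lam (hlam : 0 < lam) lam' (hlam' : 0 < lam') hlt
  obtain ⟨ε, hε, hεle⟩ : ∃ ε, 0 < ε ∧ ∀ θ ∈ torusCube d, ε ≤ (lam - φ θ)⁻¹ - (lam' - φ θ)⁻¹ :=
    isCompact_Icc.exists_forall_le'
      ((continuous_inv_sub hφ hφ0 hlam).sub (continuous_inv_sub hφ hφ0 hlam')).continuousOn
      fun θ _ => sub_pos.2 (inv_strictAnti₀ (by linarith [hφ0 θ]) (by linarith))
  obtain ⟨i₀, hi₀⟩ := Finite.exists_min fun i => s i ^ 2
  have hle := resolventMatrix_le_add_algebraMap (s := s) hx hφ hφ0 hlam' hlam (δ := -ε)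
    (c := -(ε * s i₀ ^ 2)) (fun θ hθ => by linarith [hεle θ hθ])
    (fun i => by nlinarith [hi₀ i])
  have hspec := (resolventMatrix_posSemidef hφ hφ0 hlam').1.sSup_spectrum_le_add_of_le
    (resolventMatrix_posSemidef hφ hφ0 hlam).1 hle
  have hgap : 0 < ε * s i₀ ^ 2 := by have := hs i₀; positivity
  dsimp only
  linarith

theorem lipschitzOnWith_sSup_spectrum_resolventMatrix (hx : Function.Injective x)
    (hφ : Continuous φ) (hφ0 : ∀ θ, φ θ ≤ 0) {m : ℝ} (hm : 0 < m) :
    LipschitzOnWith ((∑ i, s i ^ 2) / m ^ 2).toNNReal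
      (fun lam => sSup (spectrum ℝ (resolventMatrix φ x s lam))) (Set.Ici m) := by
  refine .of_le_add_mul _ fun lam (hlam : m ≤ lam) lam' (hlam' : m ≤ lam') => ?_
  have hpos : 0 < lam := hm.trans_le hlam
  have hpos' : 0 < lam' := hm.trans_le hlam'
  have hle := resolventMatrix_le_add_algebraMap (s := s) hx hφ hφ0 hpos hpos'
    (δ := dist lam lam' / m ^ 2) (c := (∑ i, s i ^ 2) / m ^ 2 * dist lam lam')
    (fun θ _ => by
      simpa [Real.dist_eq] using inv_le_inv_add_abs_sub_div_sq hm
        (by linarith [hφ0 θ] : m ≤ lam - φ θ) (by linarith [hφ0 θ] : m ≤ lam' - φ θ))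
    (fun i => by
      have := Finset.single_le_sum (fun j _ => sq_nonneg (s j)) (Finset.mem_univ i)
      rw [div_mul_eq_mul_div, div_mul_eq_mul_div, mul_comm]
      gcongr)
  rw [Real.coe_toNNReal _ (by positivity)]
  exact (resolventMatrix_posSemidef hφ hφ0 hpos).1.sSup_spectrum_le_add_of_le
    (resolventMatrix_posSemidef hφ hφ0 hpos').1 hle

theorem continuousOn_sSup_spectrum_resolventMatrix (hx : Function.Injective x)
    (hφ : Continuous φ) (hφ0 : ∀ θ, φ θ ≤ 0) :
    ContinuousOn (fun lam => sSup (spectrum ℝ (resolventMatrix φ x s lam))) (Set.Ioi 0) :=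
  continuousOn_of_locally_continuousOn fun lam (hlam : 0 < lam) =>
    ⟨Set.Ioi (lam / 2), isOpen_Ioi, half_lt_self hlam,
      (lipschitzOnWith_sSup_spectrum_resolventMatrix hx hφ hφ0 (half_pos hlam)).continuousOn.mono
        fun _ ht => Set.mem_Ici.2 (le_of_lt ht.2)⟩

end Resolvent

theorem gamma_continuous_strictAnti_general (d : ℕ) (a : (Fin d → ℤ) → ℝ)
    (hnonneg : ∀ z, z ≠ 0 → 0 ≤ a z)
    (hsum : Summable fun z => |a z|)
    (htot : ∑' z, a z = 0)
    (N : ℕ) (hN : 1 ≤ N) (X : Fin N → Fin d → ℤ) (hX : Function.Injective X)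
    (β : Fin N → ℝ) (hβ : ∀ j, 0 < β j)
    (phi : (Fin d → ℝ) → ℝ)
    (hphi : ∀ θ, phi θ = ∑' z : Fin d → ℤ, a z * Real.cos (∑ i, θ i * (z i : ℝ)))
    (I : ℝ → (Fin d → ℤ) → ℝ)
    (hI : ∀ (lam : ℝ) (x : Fin d → ℤ), I lam x = ((2 * Real.pi) ^ d)⁻¹ *
      ∫ θ in Set.Icc (fun _ : Fin d => -Real.pi) (fun _ : Fin d => Real.pi),
        Real.cos (∑ i, θ i * (x i : ℝ)) / (lam - phi θ))
    (G : ℝ → Matrix (Fin N) (Fin N) ℝ)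
    (hG : ∀ (lam : ℝ) (i j : Fin N), G lam i j = β j * I lam (X j - X i))
    (γ : ℝ → ℝ)
    (hγ : ∀ lam : ℝ, γ lam =
      (spectralRadius ℂ ((G lam).map (fun r => (r : ℂ)))).toReal) :
    (∀ lam : ℝ, 0 < lam → γ lam ∈ spectrum ℝ (G lam)) ∧
      StrictAntiOn γ (Set.Ioi 0) ∧ ContinuousOn γ (Set.Ioi 0) := by
  have : Nonempty (Fin N) := ⟨⟨0, hN⟩⟩
  have hφ : Continuous phi := funext hphi ▸ continuous_tsum_mul_cos hsum
  have hφ0 : ∀ θ, phi θ ≤ 0 := fun θ => hphi θ ▸ tsum_mul_cos_nonpos hnonneg hsum htot θ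
  set s : Fin N → ℝ := fun j => √(β j)
  have hcharpoly : ∀ lam, (G lam).charpoly = (resolventMatrix phi X s lam).charpoly := by
    intro lam
    have hGM : G lam = fourierMatrix X (fun θ => (lam - phi θ)⁻¹) * diagonal (s * s) := by
      ext i j
      rw [hG, hI, mul_diagonal, fourierMatrix, of_apply, Pi.mul_apply,
        Real.mul_self_sqrt (hβ j).le]
      simp only [div_eq_mul_inv, torusCube]
      ring
    rw [hGM, charpoly_mul_diagonal_mul_self]
    rfl
  have hγR : ∀ lam, 0 < lam → γ lam = sSup (spectrum ℝ (resolventMatrix phi X s lam)) := by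
    intro lam hlam
    rw [hγ, spectralRadius_map_ofReal_eq_of_charpoly_eq (hcharpoly lam),
      (resolventMatrix_posSemidef hφ hφ0 hlam).toReal_spectralRadius_map_ofReal]
  refine ⟨fun lam hlam => ?_, fun lam hlam lam' hlam' hlt => ?_, ?_⟩
  · rw [hγR lam hlam, spectrum_eq_of_charpoly_eq (hcharpoly lam)]
    exact (resolventMatrix_posSemidef hφ hφ0 hlam).1.sSup_spectrum_mem
  · rw [hγR lam hlam, hγR lam' hlam']
    exact strictAntiOn_sSup_spectrum_resolventMatrix hX hφ hφ0
      (fun i => (Real.sqrt_pos.2 (hβ i)).ne') hlam hlam' hlt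
  · exact (continuousOn_sSup_spectrum_resolventMatrix hX hφ hφ0).congr fun lam hlam =>
      hγR lam hlam

/-- The largest eigenvalue `γ(λ)` of the positive matrix `G(λ)` (equal to its spectral
radius) is an eigenvalue of `G(λ)`, and is a continuous, strictly decreasing function
of `λ` on `(0, ∞)`. -/
theorem gamma_continuous_strictAnti (d : ℕ) (hd : 1 ≤ d) (a : (Fin d → ℤ) → ℝ)
    (hsymm : ∀ z, a z = a (-z))
    (hnonneg : ∀ z, z ≠ 0 → 0 ≤ a z)
    (hneg : a 0 < 0)
    (hsum : Summable fun z => |a z|)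
    (htot : ∑' z, a z = 0)
    (hirr : ∀ z : Fin d → ℤ, ∃ (k : ℕ) (zs : Fin k → Fin d → ℤ),
      z = ∑ i, zs i ∧ ∀ i, a (zs i) ≠ 0)
    (N : ℕ) (hN : 1 ≤ N) (X : Fin N → Fin d → ℤ) (hX : Function.Injective X)
    (β : Fin N → ℝ) (hβ : ∀ j, 0 < β j)
    (phi : (Fin d → ℝ) → ℝ)
    (hphi : ∀ θ, phi θ = ∑' z : Fin d → ℤ, a z * Real.cos (∑ i, θ i * (z i : ℝ)))
    (I : ℝ → (Fin d → ℤ) → ℝ)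
    (hI : ∀ (lam : ℝ) (x : Fin d → ℤ), I lam x = ((2 * Real.pi) ^ d)⁻¹ *
      ∫ θ in Set.Icc (fun _ : Fin d => -Real.pi) (fun _ : Fin d => Real.pi),
        Real.cos (∑ i, θ i * (x i : ℝ)) / (lam - phi θ))
    (G : ℝ → Matrix (Fin N) (Fin N) ℝ)
    (hG : ∀ (lam : ℝ) (i j : Fin N), G lam i j = β j * I lam (X j - X i))
    (γ : ℝ → ℝ)
    (hγ : ∀ lam : ℝ, γ lam =
      (spectralRadius ℂ ((G lam).map (fun r => (r : ℂ)))).toReal) :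
    (∀ lam : ℝ, 0 < lam → γ lam ∈ spectrum ℝ (G lam)) ∧
      StrictAntiOn γ (Set.Ioi 0) ∧ ContinuousOn γ (Set.Ioi 0) :=
  gamma_continuous_strictAnti_general d a hnonneg hsum htot N hN X hX β hβ phi hphi I hI G hG γ hγ
end

section
/- Let E be a separable complex Hilbert space and H a bounded self-adjoint operator on E. Suppose there exist s > 0 and a finite non-empty set Λ ⊆ (0, ∞) such that the spectrum of H is contained in [−s, 0] ∪ Λ, and every λ ∈ Λ is an isolated point of the spectrum that is an eigenvalue of H with finite-dimensional eigenspace. Let λ₀ = max Λ. Then for every m₀ ∈ E, the solution m(t) = exp(tH) m₀ of the Cauchy problem m'(t) = H m(t), m(0) = m₀, satisfies: e^{−λ₀ t} m(t) converges in norm, as t → ∞, to P m₀, where P is the orthogonal projection of E onto the eigenspace ker(H − λ₀·I). -/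
/-!
Only finitely many eigenvalues lie above `0`, so there is `μ < λ₀` with
`σ(H) ⊆ {λ₀} ∪ (-∞, μ]`. Hence the indicator `1_{λ₀}` is continuous on `σ(H)`, and
`P = 1_{λ₀}(H)` is defined by the continuous functional calculus. By the isometry of the
calculus, `‖e^{-λ₀t} e^{tH} - P‖ = sup_{x ∈ σ(H)} |e^{t(x-λ₀)} - 1_{λ₀}(x)| ≤ e^{-t(λ₀-μ)}`.
Finally `P` is the orthogonal projection onto `ker(H - λ₀)`: it is self-adjoint,
`(H - λ₀) P = 0`, and `1 - P = R(H) (H - λ₀)` with `R(x) = (x - λ₀)⁻¹` off `λ₀`.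
-/

open Filter Topology Set

theorem ContinuousOn.insert_of_isClosed {α β : Type*} [TopologicalSpace α] [T1Space α]
    [TopologicalSpace β] {f : α → β} {s : Set α} (hf : ContinuousOn f s) (hs : IsClosed s)
    (a : α) : ContinuousOn f (insert a s) := by
  rw [insert_eq]
  exact (continuousOn_singleton f a).union_of_isClosed hf isClosed_singleton hs

theorem continuousOn_ite_eq_insert_Iic {lam μ : ℝ} (hμ : μ < lam) :
    ContinuousOn (fun x : ℝ => if x = lam then (1 : ℝ) else 0) (insert lam (Iic μ)) := by
  refine ContinuousOn.insert_of_isClosed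
    ((continuousOn_const (c := (0 : ℝ))).congr fun x hx => ?_) isClosed_Iic lam
  simp [((mem_Iic.mp hx).trans_lt hμ).ne]

theorem continuousOn_ite_inv_sub_insert_Iic {lam μ : ℝ} (hμ : μ < lam) :
    ContinuousOn (fun x : ℝ => if x = lam then 0 else (x - lam)⁻¹) (insert lam (Iic μ)) := by
  have hne : ∀ x ∈ Iic μ, x ≠ lam := fun x hx => ((mem_Iic.mp hx).trans_lt hμ).ne
  refine ContinuousOn.insert_of_isClosed (f := fun x : ℝ => if x = lam then 0 else (x - lam)⁻¹)
    ?_ isClosed_Iic lam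
  refine ContinuousOn.congr (f := fun x : ℝ => (x - lam)⁻¹) ?_ fun x hx => by simp [hne x hx]
  exact (continuousOn_id.sub continuousOn_const).inv₀ fun x hx => sub_ne_zero.mpr (hne x hx)

theorem exists_lt_Iic_union_subset_insert_Iic {Λ : Finset ℝ} {b lam : ℝ} (hb : b < lam)
    (hΛ : ∀ x ∈ Λ, x ≤ lam) : ∃ μ < lam, Iic b ∪ ↑Λ ⊆ insert lam (Iic μ) := by
  set K := insert b (Λ.erase lam)
  have hK : K.Nonempty := Finset.insert_nonempty _ _
  refine ⟨K.max' hK, (Finset.max'_lt_iff _ _).mpr fun y hy => ?_, fun x hx => ?_⟩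
  · rcases Finset.mem_insert.mp hy with rfl | hy
    · exact hb
    · obtain ⟨hne, hyΛ⟩ := Finset.mem_erase.mp hy
      exact (hΛ y hyΛ).lt_of_ne hne
  · rcases hx with hx | hx
    · exact Or.inr ((mem_Iic.mp hx).trans (K.le_max' b (Finset.mem_insert_self _ _)))
    · rcases eq_or_ne x lam with rfl | hne
      · exact mem_insert _ _
      · exact Or.inr (K.le_max' x (Finset.mem_insert_of_mem (Finset.mem_erase.mpr ⟨hne, hx⟩)))

theorem spectrum_real_subset_of_spectrum_complex_subset {A : Type*} [Ring A] [Algebra ℂ A]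
    {a : A} {S : Set ℝ} (h : spectrum ℂ a ⊆ (fun r : ℝ => (r : ℂ)) '' S) :
    spectrum ℝ a ⊆ S := by
  rw [← spectrum.preimage_algebraMap ℂ, ← Complex.ofReal_injective.preimage_image S]
  exact preimage_mono h

section

variable {A : Type*} [NormedRing A] [StarRing A] [NormedAlgebra ℝ A]

section CFC

variable [ContinuousFunctionalCalculus ℝ A IsSelfAdjoint] {a : A} {lam μ : ℝ}

/-- When `lam` is an isolated point of the spectrum this is the spectral projection onto the
`lam`-eigenspace; otherwise the indicator is discontinuous on the spectrum and `cfc` returns the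
junk value `0`. -/
noncomputable def spectralProjection (a : A) (lam : ℝ) : A :=
  cfc (fun x : ℝ => if x = lam then 1 else 0) a

theorem isSelfAdjoint_spectralProjection : IsSelfAdjoint (spectralProjection a lam) :=
  cfc_predicate (p := IsSelfAdjoint) _ a

theorem cfc_sub_const_eq_sub_algebraMap (ha : IsSelfAdjoint a) :
    cfc (fun x : ℝ => x - lam) a = a - algebraMap ℝ A lam := by
  rw [cfc_sub _ _ a, cfc_id' ℝ a, cfc_const lam a]

theorem sub_algebraMap_mul_spectralProjection (ha : IsSelfAdjoint a)
    (hgap : spectrum ℝ a ⊆ insert lam (Iic μ)) (hμ : μ < lam) :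
    (a - algebraMap ℝ A lam) * spectralProjection a lam = 0 := by
  have hP := (continuousOn_ite_eq_insert_Iic hμ).mono hgap
  rw [spectralProjection, ← cfc_sub_const_eq_sub_algebraMap ha, ← cfc_mul _ _ a]
  refine (cfc_congr fun x _ => ?_).trans (cfc_zero ℝ a)
  rcases eq_or_ne x lam with rfl | hx <;> simp [*]

theorem one_sub_spectralProjection (ha : IsSelfAdjoint a)
    (hgap : spectrum ℝ a ⊆ insert lam (Iic μ)) (hμ : μ < lam) :
    1 - spectralProjection a lam =
      cfc (fun x : ℝ => if x = lam then 0 else (x - lam)⁻¹) a *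
        (a - algebraMap ℝ A lam) := by
  have hP := (continuousOn_ite_eq_insert_Iic hμ).mono hgap
  have hR := (continuousOn_ite_inv_sub_insert_Iic hμ).mono hgap
  rw [spectralProjection, ← cfc_sub_const_eq_sub_algebraMap ha, ← cfc_mul _ _ a,
    ← cfc_one ℝ a, ← cfc_sub _ _ a]
  refine cfc_congr fun x _ => ?_
  rcases eq_or_ne x lam with rfl | hx
  · simp
  · simp [hx, inv_mul_cancel₀ (sub_ne_zero.mpr hx)]

theorem exp_neg_mul_smul_exp_smul_eq_cfc [StarModule ℝ A] (ha : IsSelfAdjoint a) (t : ℝ) :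
    Real.exp (-(lam * t)) • NormedSpace.exp (t • a) =
      cfc (fun x => Real.exp (t * (x - lam))) a := by
  rw [← CFC.real_exp_eq_normedSpace_exp (IsSelfAdjoint.smul (star_trivial t) ha),
    ← cfc_comp_const_mul t Real.exp a, ← cfc_smul (Real.exp (-(lam * t))) _ a]
  refine cfc_congr fun x _ => ?_
  rw [smul_eq_mul, ← Real.exp_add]
  ring_nf

end CFC

section Isometric

variable [IsometricContinuousFunctionalCalculus ℝ A IsSelfAdjoint] [StarModule ℝ A]
  {a : A} {lam μ : ℝ}

theorem norm_exp_neg_mul_smul_exp_smul_sub_spectralProjection_le (ha : IsSelfAdjoint a)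
    (hgap : spectrum ℝ a ⊆ insert lam (Iic μ)) (hμ : μ < lam) {t : ℝ} (ht : 0 ≤ t) :
    ‖Real.exp (-(lam * t)) • NormedSpace.exp (t • a) - spectralProjection a lam‖ ≤
      Real.exp (t * (μ - lam)) := by
  have hP := (continuousOn_ite_eq_insert_Iic hμ).mono hgap
  rw [exp_neg_mul_smul_exp_smul_eq_cfc ha, spectralProjection, ← cfc_sub _ _ a]
  refine norm_cfc_le (Real.exp_nonneg _) fun x hx => ?_
  rcases hgap hx with rfl | hxμ
  · simp [Real.exp_nonneg]
  · have hx : x ≠ lam := ((mem_Iic.mp hxμ).trans_lt hμ).ne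
    simp only [hx, if_false, sub_zero, Real.norm_eq_abs, abs_of_pos (Real.exp_pos _)]
    gcongr
    exact mem_Iic.mp hxμ

theorem tendsto_exp_neg_mul_smul_exp_smul_spectralProjection (ha : IsSelfAdjoint a)
    (hgap : spectrum ℝ a ⊆ insert lam (Iic μ)) (hμ : μ < lam) :
    Tendsto (fun t : ℝ => Real.exp (-(lam * t)) • NormedSpace.exp (t • a)) atTop
      (𝓝 (spectralProjection a lam)) := by
  rw [tendsto_iff_norm_sub_tendsto_zero]
  have hdecay : Tendsto (fun t : ℝ => Real.exp (t * (μ - lam))) atTop (𝓝 0) :=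
    Real.tendsto_exp_atBot.comp (tendsto_id.atTop_mul_const_of_neg (sub_neg.mpr hμ))
  refine squeeze_zero' (Eventually.of_forall fun t => norm_nonneg _) ?_ hdecay
  filter_upwards [eventually_ge_atTop 0] with t ht
  exact norm_exp_neg_mul_smul_exp_smul_sub_spectralProjection_le ha hgap hμ ht

end Isometric

end

theorem IsSelfAdjoint.sub_apply_mem_orthogonal_ker {𝕜 E : Type*} [RCLike 𝕜]
    [NormedAddCommGroup E] [InnerProductSpace 𝕜 E] [CompleteSpace E] {P S T : E →L[𝕜] E}
    (hP : IsSelfAdjoint P) (h : 1 - P = S * T) (x : E) :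
    x - P x ∈ (LinearMap.ker (T : E →ₗ[𝕜] E))ᗮ := by
  rw [Submodule.mem_orthogonal]
  intro v hv
  have hPv : v = P v := by
    have hTv : T v = 0 := hv
    simpa [hTv, eq_comm (a := (0 : E)), sub_eq_zero] using congr($h v)
  rw [inner_sub_right, ← ContinuousLinearMap.coe_coe P, ← hP.isSymmetric v x,
    ContinuousLinearMap.coe_coe, ← hPv, sub_self]

theorem exp_tendsto_top_eigenprojection_general
    (E : Type*) [NormedAddCommGroup E] [InnerProductSpace ℂ E] [CompleteSpace E]
    (H : E →L[ℂ] E) (hsa : IsSelfAdjoint H)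
    (s : ℝ)
    (Λ : Finset ℝ) (hΛne : Λ.Nonempty) (hΛpos : ∀ lam ∈ Λ, (0 : ℝ) < lam)
    (hspec : spectrum ℂ H ⊆ (fun r : ℝ => (r : ℂ)) '' (Set.Icc (-s) 0 ∪ ↑Λ))
    (lam0 : ℝ) (hlam0 : lam0 = Λ.max' hΛne) (m0 : E) :
    ∃ w : E, w ∈ LinearMap.ker ((H - (lam0 : ℂ) • (1 : E →L[ℂ] E) : E →L[ℂ] E) : E →ₗ[ℂ] E) ∧
      m0 - w ∈ (LinearMap.ker ((H - (lam0 : ℂ) • (1 : E →L[ℂ] E) : E →L[ℂ] E) : E →ₗ[ℂ] E))ᗮ ∧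
      Tendsto (fun t : ℝ => Real.exp (-(lam0 * t)) • (NormedSpace.exp ((t : ℂ) • H)) m0)
        atTop (nhds w) := by
  have hlam0Λ : lam0 ∈ Λ := hlam0 ▸ Λ.max'_mem hΛne
  obtain ⟨μ, hμ, hsub⟩ := exists_lt_Iic_union_subset_insert_Iic (hΛpos lam0 hlam0Λ)
    fun x hx => hlam0 ▸ Λ.le_max' x hx
  have hgap : spectrum ℝ H ⊆ insert lam0 (Iic μ) :=
    (spectrum_real_subset_of_spectrum_complex_subset hspec).trans
      ((union_subset_union_left _ Icc_subset_Iic_self).trans hsub)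
  have hT : H - (lam0 : ℂ) • (1 : E →L[ℂ] E) = H - algebraMap ℝ (E →L[ℂ] E) lam0 := by
    rw [Algebra.algebraMap_eq_smul_one, Complex.coe_smul]
  refine ⟨spectralProjection H lam0 m0, ?_, ?_, ?_⟩
  · rw [hT, LinearMap.mem_ker, ContinuousLinearMap.coe_coe, ← mul_apply_eq_comp,
      sub_algebraMap_mul_spectralProjection hsa hgap hμ, zero_apply]
  · rw [hT]
    exact isSelfAdjoint_spectralProjection.sub_apply_mem_orthogonal_ker
      (one_sub_spectralProjection hsa hgap hμ) m0
  · simp_rw [Complex.coe_smul, ← smul_apply]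
    exact ((ContinuousLinearMap.apply ℂ E m0).continuous.tendsto _).comp
      (tendsto_exp_neg_mul_smul_exp_smul_spectralProjection hsa hgap hμ)

/-- For a bounded self-adjoint operator whose spectrum consists of a part in `[-s,0]`
together with finitely many isolated positive eigenvalues with finite-dimensional
eigenspaces, `e^{-λ₀ t} exp(tH) m₀` converges to the orthogonal projection of `m₀`
onto the eigenspace of the largest eigenvalue `λ₀`. -/
theorem exp_tendsto_top_eigenprojection
    (E : Type*) [NormedAddCommGroup E] [InnerProductSpace ℂ E] [CompleteSpace E]
    [TopologicalSpace.SeparableSpace E]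
    (H : E →L[ℂ] E) (hsa : IsSelfAdjoint H)
    (s : ℝ) (hs : 0 < s)
    (Λ : Finset ℝ) (hΛne : Λ.Nonempty) (hΛpos : ∀ lam ∈ Λ, (0 : ℝ) < lam)
    (hspec : spectrum ℂ H ⊆ (fun r : ℝ => (r : ℂ)) '' (Set.Icc (-s) 0 ∪ ↑Λ))
    (hiso : ∀ lam ∈ Λ, nhdsWithin (lam : ℂ) (spectrum ℂ H \ {(lam : ℂ)}) = ⊥)
    (heigen : ∀ lam ∈ Λ, ∃ v : E, v ≠ 0 ∧ H v = (lam : ℂ) • v)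
    (hfin : ∀ lam ∈ Λ,
      FiniteDimensional ℂ ↥(LinearMap.ker ((H - (lam : ℂ) • (1 : E →L[ℂ] E) : E →L[ℂ] E) : E →ₗ[ℂ] E)))
    (lam0 : ℝ) (hlam0 : lam0 = Λ.max' hΛne) (m0 : E) :
    ∃ w : E, w ∈ LinearMap.ker ((H - (lam0 : ℂ) • (1 : E →L[ℂ] E) : E →L[ℂ] E) : E →ₗ[ℂ] E) ∧
      m0 - w ∈ (LinearMap.ker ((H - (lam0 : ℂ) • (1 : E →L[ℂ] E) : E →L[ℂ] E) : E →ₗ[ℂ] E))ᗮ ∧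
      Tendsto (fun t : ℝ => Real.exp (-(lam0 * t)) • (NormedSpace.exp ((t : ℂ) • H)) m0)
        atTop (nhds w) :=
  exp_tendsto_top_eigenprojection_general E H hsa s Λ hΛne hΛpos hspec lam0 hlam0 m0
end

section
/- Let E be a complex Hilbert space and H a bounded self-adjoint operator on E whose spectrum is contained in (−∞, −s] for some s > 0 (in particular H is invertible). Let ν₀ ∈ E and let f : [0, ∞) → E be continuous with f(t) → f* in norm as t → ∞. Then the solution ν(t) = exp(tH) ν₀ + ∫_0^t exp((t−σ)H) f(σ) dσ of the Cauchy problem ν'(t) = H ν(t) + f(t), ν(0) = ν₀, converges in norm to −H^{−1} f* as t → ∞. -/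
/-!
Since `H` is self-adjoint with spectrum in `(-∞, -s]`, the continuous functional calculus gives
`‖exp (t • H)‖ ≤ e^{-st}` for `t ≥ 0`. Split `f = f* + (f - f*)`. The constant forcing integrates
explicitly to `H⁻¹ (exp (t • H) f* - f*) → -H⁻¹ f*`, the term `exp (t • H) ν₀` decays, and the
remaining integral is bounded by the convolution of `e^{-s(t-σ)}` with `‖f σ - f*‖ → 0`, which tends
to `0`: split it at a time `T` after which `‖f - f*‖` is small; the part over `[0, T]` carries the
factor `e^{-s(t-T)}`, the part over `[T, t]` is small because the kernel has integral at most `1/s`.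
-/

open Filter Set intervalIntegral Topology MeasureTheory

lemma spectrum_real_subset_Iic_of_spectrum_complex {A : Type*} [Ring A] [Algebra ℂ A] {a : A}
    {c : ℝ} (h : spectrum ℂ a ⊆ (fun r : ℝ => (r : ℂ)) '' Iic c) : spectrum ℝ a ⊆ Iic c := by
  rw [← spectrum.preimage_algebraMap ℂ]
  exact (preimage_mono h).trans (preimage_image_eq _ Complex.ofReal_injective).le

lemma IsSelfAdjoint.norm_exp_smul_le {A : Type*} [CStarAlgebra A] {a : A} (ha : IsSelfAdjoint a)
    {s t : ℝ} (hspec : spectrum ℝ a ⊆ Iic (-s)) (ht : 0 ≤ t) :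
    ‖NormedSpace.exp (t • a)‖ ≤ Real.exp (-(s * t)) := by
  rw [← CFC.real_exp_eq_normedSpace_exp, ← cfc_comp_const_mul t Real.exp a]
  refine norm_cfc_le (Real.exp_nonneg _) fun x hx => ?_
  rw [Real.norm_of_nonneg (Real.exp_nonneg _)]
  exact Real.exp_le_exp.2 (by nlinarith [mem_Iic.1 (hspec hx)])

namespace ContinuousLinearMap

variable {E : Type*} [NormedAddCommGroup E] [NormedSpace ℂ E] [CompleteSpace E]

lemma apply_integral_exp_smul_apply (H : E →L[ℂ] E) (x : E) (t : ℝ) :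
    H (∫ u in (0 : ℝ)..t, NormedSpace.exp (u • H) x) = NormedSpace.exp (t • H) x - x := by
  have hderiv (u : ℝ) : HasDerivAt (fun v : ℝ => NormedSpace.exp (v • H) x)
      (H (NormedSpace.exp (u • H) x)) u := by
    simpa [Function.comp_def] using
      ((apply ℂ E x).restrictScalars ℝ).hasFDerivAt.comp_hasDerivAt u
        (hasDerivAt_exp_smul_const' H u)
  have hcont : Continuous fun u : ℝ => NormedSpace.exp (u • H) x :=
    continuous_iff_continuousAt.2 fun u => (hderiv u).continuousAt
  rw [← H.intervalIntegral_comp_comm (hcont.intervalIntegrable _ _),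
    integral_eq_sub_of_hasDerivAt (fun u _ => hderiv u)
      ((H.continuous.comp hcont).intervalIntegrable _ _)]
  simp

lemma integral_exp_sub_smul_apply {H : E →L[ℂ] E} (hH : IsUnit H) (x : E) (t : ℝ) :
    ∫ σ in (0 : ℝ)..t, NormedSpace.exp ((t - σ) • H) x
      = Ring.inverse H (NormedSpace.exp (t • H) x - x) := by
  rw [integral_comp_sub_left (fun u => NormedSpace.exp (u • H) x), sub_self, sub_zero,
    ← H.apply_integral_exp_smul_apply, ← mul_apply_eq_comp, Ring.inverse_mul_cancel _ hH,
    one_apply_eq_self]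

lemma integral_exp_sub_smul_apply_eq_integral_sub_add {H : E →L[ℂ] E} (hH : IsUnit H)
    {f : ℝ → E} {t : ℝ} (ht : 0 ≤ t) (hf : ContinuousOn f (Icc 0 t)) (c : E) :
    ∫ σ in (0 : ℝ)..t, NormedSpace.exp ((t - σ) • H) (f σ)
      = (∫ σ in (0 : ℝ)..t, NormedSpace.exp ((t - σ) • H) (f σ - c))
          + Ring.inverse H (NormedSpace.exp (t • H) c - c) := by
  have hexp : ContinuousOn (fun σ : ℝ => NormedSpace.exp ((t - σ) • H)) (Icc 0 t) :=
    ((differentiable_exp_smul_const ℝ H).continuous.comp (by fun_prop)).continuousOn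
  have hfc : ContinuousOn (fun σ => f σ - c) (Icc 0 t) := hf.sub continuousOn_const
  rw [← integral_exp_sub_smul_apply hH, ← integral_add
    ((hexp.clm_apply hfc).intervalIntegrable_of_Icc ht)
    ((hexp.clm_apply continuousOn_const).intervalIntegrable_of_Icc ht)]
  simp only [map_sub, sub_add_cancel]

end ContinuousLinearMap

section ExponentialKernel

variable {s : ℝ}

lemma tendsto_exp_neg_mul_sub_atTop (hs : 0 < s) (T : ℝ) :
    Tendsto (fun t => Real.exp (-(s * (t - T)))) atTop (𝓝 0) :=
  Real.tendsto_exp_atBot.comp <| tendsto_neg_atTop_atBot.comp <|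
    (tendsto_atTop_add_const_right _ (-T) tendsto_id).const_mul_atTop hs

lemma intervalIntegrable_exp_neg_mul_sub_mul {r : ℝ → ℝ} (hr : ContinuousOn r (Ici 0))
    (t : ℝ) {a b : ℝ} (ha : 0 ≤ a) (hab : a ≤ b) :
    IntervalIntegrable (fun σ => Real.exp (-(s * (t - σ))) * r σ) volume a b :=
  ContinuousOn.intervalIntegrable_of_Icc hab <|
    (by fun_prop : Continuous fun σ => Real.exp (-(s * (t - σ)))).continuousOn.mul
      (hr.mono fun _ hσ => ha.trans hσ.1)

lemma integral_exp_neg_mul_sub_le (hs : 0 < s) (T t : ℝ) :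
    ∫ σ in T..t, Real.exp (-(s * (t - σ))) ≤ 1 / s := by
  have hderiv (σ : ℝ) : HasDerivAt (fun σ => Real.exp (-(s * (t - σ))) / s)
      (Real.exp (-(s * (t - σ)))) σ := by
    have hinner : HasDerivAt (fun σ => -(s * (t - σ))) s σ := by
      simpa using (((hasDerivAt_id σ).const_sub t).const_mul s).fun_neg
    simpa [hs.ne'] using hinner.exp.div_const s
  rw [integral_eq_sub_of_hasDerivAt (fun σ _ => hderiv σ)
    (Continuous.intervalIntegrable (by fun_prop) _ _)]
  have : 0 ≤ Real.exp (-(s * (t - T))) / s := by positivity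
  simp only [sub_self, mul_zero, neg_zero, Real.exp_zero]
  linarith

lemma integral_exp_neg_mul_sub_mul_le_exp_mul (hs : 0 ≤ s) {r : ℝ → ℝ}
    (hr : ContinuousOn r (Ici 0)) (hr_nonneg : 0 ≤ r) {T : ℝ} (hT : 0 ≤ T) (t : ℝ) :
    ∫ σ in (0 : ℝ)..T, Real.exp (-(s * (t - σ))) * r σ
      ≤ Real.exp (-(s * (t - T))) * ∫ σ in (0 : ℝ)..T, r σ := by
  rw [← intervalIntegral.integral_const_mul]
  refine integral_mono_on hT (intervalIntegrable_exp_neg_mul_sub_mul hr t le_rfl hT)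
    (((hr.mono Icc_subset_Ici_self).intervalIntegrable_of_Icc hT).const_mul _) fun σ hσ => ?_
  exact mul_le_mul_of_nonneg_right (Real.exp_le_exp.2 (by nlinarith [hσ.2])) (hr_nonneg σ)

lemma integral_exp_neg_mul_sub_mul_le_div (hs : 0 < s) {r : ℝ → ℝ}
    (hr : ContinuousOn r (Ici 0)) {T t c : ℝ} (hT : 0 ≤ T) (hTt : T ≤ t) (hc : 0 ≤ c)
    (hrc : ∀ σ ∈ Icc T t, r σ ≤ c) :
    ∫ σ in T..t, Real.exp (-(s * (t - σ))) * r σ ≤ c / s :=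
  calc ∫ σ in T..t, Real.exp (-(s * (t - σ))) * r σ
      ≤ ∫ σ in T..t, Real.exp (-(s * (t - σ))) * c :=
        integral_mono_on hTt (intervalIntegrable_exp_neg_mul_sub_mul hr t hT hTt)
          (Continuous.intervalIntegrable (by fun_prop) _ _)
          fun σ hσ => mul_le_mul_of_nonneg_left (hrc σ hσ) (Real.exp_nonneg _)
    _ = (∫ σ in T..t, Real.exp (-(s * (t - σ)))) * c := intervalIntegral.integral_mul_const _ _
    _ ≤ 1 / s * c := mul_le_mul_of_nonneg_right (integral_exp_neg_mul_sub_le hs T t) hc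
    _ = c / s := one_div_mul_eq_div s c

lemma tendsto_integral_exp_neg_mul_sub_mul (hs : 0 < s) {r : ℝ → ℝ} (hr : ContinuousOn r (Ici 0))
    (hr_nonneg : 0 ≤ r) (hr_lim : Tendsto r atTop (𝓝 0)) :
    Tendsto (fun t => ∫ σ in (0 : ℝ)..t, Real.exp (-(s * (t - σ))) * r σ) atTop (𝓝 0) := by
  refine tendsto_order.2 ⟨fun a ha => ?_, fun ε hε => ?_⟩
  · filter_upwards [eventually_ge_atTop 0] with t ht
    exact ha.trans_le (integral_nonneg ht fun σ _ => mul_nonneg (Real.exp_nonneg _) (hr_nonneg σ))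
  obtain ⟨T, hT, hrT⟩ : ∃ T, 0 ≤ T ∧ ∀ σ, T ≤ σ → r σ ≤ s * ε / 2 := by
    obtain ⟨T, hT⟩ := eventually_atTop.1
      (hr_lim.eventually (ge_mem_nhds (by positivity : 0 < s * ε / 2)))
    exact ⟨max T 0, le_max_right _ _, fun σ hσ => hT σ (le_of_max_le_left hσ)⟩
  have hhead : Tendsto (fun t => Real.exp (-(s * (t - T))) * ∫ σ in (0 : ℝ)..T, r σ)
      atTop (𝓝 0) := by
    simpa using (tendsto_exp_neg_mul_sub_atTop hs T).mul_const _
  filter_upwards [hhead.eventually (gt_mem_nhds (half_pos hε)), eventually_ge_atTop T]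
    with t hhead_t hTt
  calc ∫ σ in (0 : ℝ)..t, Real.exp (-(s * (t - σ))) * r σ
      = (∫ σ in (0 : ℝ)..T, Real.exp (-(s * (t - σ))) * r σ)
          + ∫ σ in T..t, Real.exp (-(s * (t - σ))) * r σ :=
        (integral_add_adjacent_intervals (intervalIntegrable_exp_neg_mul_sub_mul hr t le_rfl hT)
          (intervalIntegrable_exp_neg_mul_sub_mul hr t hT hTt)).symm
    _ < ε / 2 + s * ε / 2 / s :=
        add_lt_add_of_lt_of_le
          ((integral_exp_neg_mul_sub_mul_le_exp_mul hs.le hr hr_nonneg hT t).trans_lt hhead_t)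
          (integral_exp_neg_mul_sub_mul_le_div hs hr hT hTt (by positivity)
            fun σ hσ => hrT σ hσ.1)
    _ = ε := by field_simp; ring

variable {𝕜 E F : Type*} [NontriviallyNormedField 𝕜] [NormedAddCommGroup E] [NormedSpace 𝕜 E]
  [NormedAddCommGroup F] [NormedSpace 𝕜 F] {G : ℝ → E →L[𝕜] F}

lemma tendsto_apply_zero_of_norm_le_exp (hs : 0 < s)
    (hG : ∀ u, 0 ≤ u → ‖G u‖ ≤ Real.exp (-(s * u))) (x : E) :
    Tendsto (fun t => G t x) atTop (𝓝 0) := by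
  refine squeeze_zero_norm' ?_ (by simpa using (tendsto_exp_neg_mul_sub_atTop hs 0).mul_const ‖x‖)
  filter_upwards [eventually_ge_atTop 0] with t ht
  simpa using (G t).le_of_opNorm_le (hG t ht) x

lemma tendsto_integral_apply_sub_zero_of_norm_le_exp [NormedSpace ℝ F] (hs : 0 < s)
    (hG : ∀ u, 0 ≤ u → ‖G u‖ ≤ Real.exp (-(s * u))) {g : ℝ → E}
    (hg : ContinuousOn g (Ici 0)) (hg_lim : Tendsto g atTop (𝓝 0)) :
    Tendsto (fun t => ∫ σ in (0 : ℝ)..t, G (t - σ) (g σ)) atTop (𝓝 0) := by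
  refine squeeze_zero_norm' ?_ (tendsto_integral_exp_neg_mul_sub_mul hs hg.norm
    (fun _ => norm_nonneg _) (by simpa using hg_lim.norm))
  filter_upwards [eventually_ge_atTop 0] with t ht
  refine norm_integral_le_of_norm_le ht (ae_of_all _ fun σ hσ => ?_)
    (intervalIntegrable_exp_neg_mul_sub_mul hg.norm t le_rfl ht)
  exact (G (t - σ)).le_of_opNorm_le (hG _ (sub_nonneg.2 hσ.2)) (g σ)

end ExponentialKernel

/-- If the spectrum of the bounded self-adjoint operator `H` lies in `(-∞, -s]`, `s > 0`
(so that `H` is invertible), and `f` is continuous with `f(t) → f*`, then the solution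
`ν(t) = exp(tH) ν₀ + ∫_0^t exp((t-σ)H) f(σ) dσ` of `ν' = Hν + f` converges to `-H⁻¹ f*`. -/
theorem inhomogeneous_solution_tendsto
    (E : Type*) [NormedAddCommGroup E] [InnerProductSpace ℂ E] [CompleteSpace E]
    (H : E →L[ℂ] E) (hsa : IsSelfAdjoint H)
    (s : ℝ) (hs : 0 < s)
    (hspec : spectrum ℂ H ⊆ (fun r : ℝ => (r : ℂ)) '' Set.Iic (-s))
    (ν₀ : E) (f : ℝ → E) (hf : ContinuousOn f (Set.Ici (0 : ℝ)))
    (fstar : E) (hfstar : Tendsto f atTop (nhds fstar)) :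
    Tendsto
      (fun t : ℝ => (NormedSpace.exp ((t : ℂ) • H)) ν₀ +
        ∫ σ in (0 : ℝ)..t, (NormedSpace.exp (((t - σ : ℝ) : ℂ) • H)) (f σ))
      atTop (nhds (-(Ring.inverse H) fstar)) := by
  simp only [Complex.coe_smul]
  have hspec_real := spectrum_real_subset_Iic_of_spectrum_complex hspec
  have hH : IsUnit H :=
    (spectrum.zero_notMem_iff ℝ).1 fun h0 => by linarith [mem_Iic.1 (hspec_real h0)]
  have hG (u : ℝ) (hu : 0 ≤ u) : ‖NormedSpace.exp (u • H)‖ ≤ Real.exp (-(s * u)) :=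
    hsa.norm_exp_smul_le hspec_real hu
  have hlim := (tendsto_apply_zero_of_norm_le_exp hs hG ν₀).add
    ((tendsto_integral_apply_sub_zero_of_norm_le_exp hs hG (g := fun σ => f σ - fstar)
      (hf.sub continuousOn_const) (by simpa using hfstar.sub_const fstar)).add
      (((Ring.inverse H).continuous.tendsto _).comp
        ((tendsto_apply_zero_of_norm_le_exp hs hG fstar).sub_const fstar)))
  rw [zero_add, zero_add, zero_sub, map_neg] at hlim
  refine hlim.congr' ?_
  filter_upwards [eventually_ge_atTop 0] with t ht
  rw [H.integral_exp_sub_smul_apply_eq_integral_sub_add hH ht (hf.mono Icc_subset_Ici_self) fstar]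
  rfl
end

section
/- For every integer n ≥ 2, f(n, 2) < 6·(n−1)^{n−1}. -/
/-- `f(n, r) = ∑ i₁^{i₁} ⋯ i_r^{i_r}`, the sum running over ordered `r`-tuples of
positive integers with `i₁ + ⋯ + i_r = n`. -/
def fnr (n r : ℕ) : ℕ :=
  ∑ i ∈ (Finset.Nat.antidiagonalTuple r n).filter (fun i => ∀ j, 0 < i j),
    ∏ j, (i j) ^ (i j)

/-!
In `f(n, 2) = ∑_{0<i<n} i^i (n-i)^(n-i)` the two end terms equal `(n-1)^(n-1)`. Since `x log x`
is convex, `i^i j^j` with `i + j` fixed only grows when `i, j` are pushed apart, so each of the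
`n - 3` middle terms is at most `2^2 (n-2)^(n-2)`, and `(n-3)(n-2)^(n-2) < (n-1)^(n-1)`.
-/

theorem fnr_two_eq_sum (n : ℕ) : fnr n 2 = ∑ i ∈ Finset.Ico 1 n, i ^ i * (n - i) ^ (n - i) := by
  unfold fnr
  rw [Finset.Nat.antidiagonalTuple_two, Finset.Nat.antidiagonal_eq_map, Finset.map_map,
    Finset.filter_map, Finset.sum_map]
  simp only [Function.Embedding.trans_apply, Function.Embedding.coeFn_mk,
    piFinTwoEquiv_symm_apply, Fin.prod_univ_two, Fin.forall_fin_two,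
    Function.comp_def, Fin.cons_zero, Fin.cons_one]
  apply Finset.sum_congr
  · ext x
    simp only [Finset.mem_filter, Finset.mem_range, Finset.mem_Ico]
    dsimp only [DFunLike.coe]
    omega
  · intro x _; rfl

theorem ConvexOn.apply_add_apply_add_sub_le {𝕜 E β : Type*} [Field 𝕜] [LinearOrder 𝕜]
    [IsStrictOrderedRing 𝕜] [AddCommGroup E] [Module 𝕜 E] [AddCommMonoid β] [PartialOrder β]
    [IsOrderedAddMonoid β] [Module 𝕜 β] {s : Set E} {f : E → β} (hf : ConvexOn 𝕜 s f)
    {a b z : E} (ha : a ∈ s) (hb : b ∈ s) (hz : z ∈ segment 𝕜 a b) :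
    f z + f (a + b - z) ≤ f a + f b := by
  obtain ⟨μ, ν, hμ, hν, hμν, rfl⟩ := hz
  have hreflect : a + b - (μ • a + ν • b) = ν • a + μ • b := by
    calc a + b - (μ • a + ν • b) = (μ + ν) • a + (μ + ν) • b - (μ • a + ν • b) := by
          rw [hμν, one_smul, one_smul]
      _ = ν • a + μ • b := by simp only [add_smul]; abel
  calc f (μ • a + ν • b) + f (a + b - (μ • a + ν • b))
      ≤ (μ • f a + ν • f b) + (ν • f a + μ • f b) := by
        rw [hreflect]
        exact add_le_add (hf.2 ha hb hμ hν hμν) (hf.2 ha hb hν hμ (by rwa [add_comm]))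
    _ = f a + f b := by
        rw [add_add_add_comm, ← add_smul, ← add_smul ν, add_comm ν, hμν, one_smul, one_smul]

theorem Nat.pow_self_mul_pow_self_le_of_le_of_le {a i j : ℕ} (hi : a ≤ i) (hj : a ≤ j) :
    i ^ i * j ^ j ≤ a ^ a * (i + j - a) ^ (i + j - a) := by
  obtain ⟨b, hb⟩ : ∃ b, i + j = a + b := ⟨i + j - a, by omega⟩
  rw [hb, Nat.add_sub_cancel_left]
  have hmem : (i : ℝ) ∈ segment ℝ (a : ℝ) b := by
    rw [segment_eq_Icc (by exact_mod_cast (by omega : a ≤ b))]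
    exact ⟨by exact_mod_cast hi, by exact_mod_cast (by omega : i ≤ b)⟩
  have hconv := Real.convexOn_mul_log.apply_add_apply_add_sub_le
    (Set.mem_Ici.2 a.cast_nonneg) (Set.mem_Ici.2 b.cast_nonneg) hmem
  have hreflect : (a : ℝ) + b - i = j := by rw [sub_eq_iff_eq_add', ← Nat.cast_add, ← Nat.cast_add, ← hb]
  rw [hreflect] at hconv
  have hpos (k : ℕ) : (0 : ℝ) < (k : ℝ) ^ k := by exact_mod_cast Nat.pow_self_pos
  rw [← Nat.cast_le (α := ℝ)]
  push_cast
  rw [← Real.log_le_log_iff (mul_pos (hpos i) (hpos j)) (mul_pos (hpos a) (hpos b)),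
    Real.log_mul (hpos i).ne' (hpos j).ne', Real.log_mul (hpos a).ne' (hpos b).ne']
  simpa only [Real.log_pow] using hconv

/-- For every `n ≥ 2`, `f(n, 2) < 6 (n-1)^{n-1}`. -/
theorem fnr_two_lt (n : ℕ) (hn : 2 ≤ n) : fnr n 2 < 6 * (n - 1) ^ (n - 1) := by
  rw [fnr_two_eq_sum]
  obtain rfl | ⟨m, rfl⟩ : n = 2 ∨ ∃ m, n = m + 3 := by
    rcases hn.eq_or_lt with h | h
    · exact .inl h.symm
    · exact .inr ⟨n - 3, by omega⟩
  · decide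
  have hmiddle : ∑ i ∈ Finset.Ico 2 (m + 2), i ^ i * (m + 3 - i) ^ (m + 3 - i)
      ≤ 4 * (m * (m + 1) ^ (m + 1)) := by
    have hterm (i : ℕ) (hi : i ∈ Finset.Ico 2 (m + 2)) :
        i ^ i * (m + 3 - i) ^ (m + 3 - i) ≤ 4 * (m + 1) ^ (m + 1) := by
      have hi := Finset.mem_Ico.1 hi
      simpa [show i + (m + 3 - i) - 2 = m + 1 by omega] using
        Nat.pow_self_mul_pow_self_le_of_le_of_le (a := 2) (j := m + 3 - i) hi.1 (by omega)
    simpa [mul_left_comm] using Finset.sum_le_card_nsmul _ _ _ hterm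
  have hgrowth : m * (m + 1) ^ (m + 1) < (m + 2) ^ (m + 2) := calc
    m * (m + 1) ^ (m + 1) ≤ m * (m + 2) ^ (m + 1) := by gcongr; omega
    _ < (m + 2) * (m + 2) ^ (m + 1) := by gcongr; omega
    _ = (m + 2) ^ (m + 2) := (pow_succ' _ _).symm
  rw [Finset.sum_eq_sum_Ico_succ_bot (by omega), Finset.sum_Ico_succ_top (by omega)]
  simp only [show m + 3 - 1 = m + 2 by omega, show m + 3 - (m + 2) = 1 by omega, one_pow,
    one_mul, mul_one, Nat.reduceAdd]
  omega
end

section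
/- For every integer n ≥ 3, f(n, 3) < 6·(n−1)^{n−1}. -/
open Finset

theorem ConvexOn.add_le_add_of_add_eq {𝕜 : Type*} [Field 𝕜] [LinearOrder 𝕜]
    [IsStrictOrderedRing 𝕜] {s : Set 𝕜} {f : 𝕜 → 𝕜} (hf : ConvexOn 𝕜 s f) {a b c d : 𝕜}
    (ha : a ∈ s) (hd : d ∈ s) (hab : a ≤ b) (hbd : b ≤ d) (hsum : b + c = a + d) :
    f b + f c ≤ f a + f d := by
  obtain rfl : c = a + d - b := by linarith
  rcases hab.eq_or_lt with rfl | hab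
  · simp
  have had : 0 < d - a := by linarith
  have hμ : 0 ≤ (b - a) / (d - a) := div_nonneg (by linarith) had.le
  have hν : 0 ≤ (d - b) / (d - a) := div_nonneg (by linarith) had.le
  have hsum : (d - b) / (d - a) + (b - a) / (d - a) = 1 := by field_simp; ring
  have hb := hf.2 ha hd hν hμ hsum
  have hc := hf.2 ha hd hμ hν (by rw [add_comm, hsum])
  simp only [smul_eq_mul] at hb hc
  rw [show (d - b) / (d - a) * a + (b - a) / (d - a) * d = b by field_simp; ring] at hb
  rw [show (b - a) / (d - a) * a + (d - b) / (d - a) * d = a + d - b by field_simp; ring] at hc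
  linear_combination hb + hc + (f a + f d) * hsum

theorem pow_self_mul_pow_self_le {j k m : ℕ} (hjk : j ≤ k) (hkm : k + j ≤ m) :
    k ^ k * (m - k) ^ (m - k) ≤ j ^ j * (m - j) ^ (m - j) := by
  obtain ⟨e, rfl⟩ := Nat.exists_eq_add_of_le hkm
  rw [show k + j + e - k = j + e by omega, show k + j + e - j = k + e by omega]
  have hpos (x : ℕ) : 0 < (x : ℝ) ^ x := by exact_mod_cast Nat.pow_self_pos
  rw [← Nat.cast_le (α := ℝ)]
  simp only [Nat.cast_mul, Nat.cast_pow]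
  rw [← Real.log_le_log_iff (mul_pos (hpos _) (hpos _)) (mul_pos (hpos _) (hpos _)),
    Real.log_mul (hpos _).ne' (hpos _).ne', Real.log_mul (hpos _).ne' (hpos _).ne']
  simp only [Real.log_pow]
  exact Real.convexOn_mul_log.add_le_add_of_add_eq (Set.mem_Ici.2 (by positivity))
    (Set.mem_Ici.2 (by positivity)) (by exact_mod_cast hjk) (by push_cast; linarith)
    (by push_cast; ring)

theorem two_mul_succ_mul_pow_self_le {t : ℕ} (ht : t ≠ 0) :
    2 * (t + 1) * t ^ t ≤ (t + 1) ^ (t + 1) := by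
  have bernoulli := pow_add_mul_le_add_pow (a := t) (b := 1) (Nat.zero_le _) (Nat.zero_le _) t
  rw [mul_one, Nat.cast_id, mul_pow_sub_one ht] at bernoulli
  rw [pow_succ]
  nlinarith

theorem sum_Ico_pow_self_mul_pow_self_le (n : ℕ) :
    ∑ k ∈ Ico 1 (n + 1), k ^ k * (n + 1 - k) ^ (n + 1 - k) ≤ 3 * n ^ n := by
  rcases lt_or_ge n 8 with hn | hn
  · interval_cases n <;> decide
  obtain ⟨p, rfl⟩ := Nat.exists_eq_add_of_le' hn
  set a : ℕ → ℕ := fun k ↦ k ^ k * (p + 8 + 1 - k) ^ (p + 8 + 1 - k) with ha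
  have hsplit : ∑ k ∈ Ico 1 (p + 8 + 1), a k
      = a 1 + a 2 + ∑ k ∈ Ico 3 (p + 7), a k + a (p + 7) + a (p + 8) := by
    rw [sum_Ico_succ_top (by omega), sum_Ico_succ_top (by omega : 1 ≤ p + 7),
      sum_eq_sum_Ico_succ_bot (by omega), sum_eq_sum_Ico_succ_bot (by omega)]
    ring
  have hmid : ∑ k ∈ Ico 3 (p + 7), a k ≤ (p + 4) * (27 * (p + 6) ^ (p + 6)) := by
    have := sum_le_card_nsmul (Ico 3 (p + 7)) a (27 * (p + 6) ^ (p + 6))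
      fun k hk ↦ by
        have hk := mem_Ico.1 hk
        simpa [ha, show p + 8 + 1 - 3 = p + 6 by omega] using
          pow_self_mul_pow_self_le (j := 3) (k := k) (m := p + 8 + 1) hk.1 (by omega)
    simpa using this
  have h7 := two_mul_succ_mul_pow_self_le (t := p + 7) (by omega)
  have h6 := two_mul_succ_mul_pow_self_le (t := p + 6) (by omega)
  simp only [ha, show p + 8 + 1 - 1 = p + 8 by omega, show p + 8 + 1 - 2 = p + 7 by omega,
    show p + 8 + 1 - (p + 7) = 2 by omega, show p + 8 + 1 - (p + 8) = 1 by omega] at hsplit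
  simp only [ha] at hmid
  rw [hsplit]
  generalize (p + 8) ^ (p + 8) = X at *
  generalize (p + 7) ^ (p + 7) = Y at *
  generalize (p + 6) ^ (p + 6) = Z at *
  have hZ : (p + 4) * (27 * Z) ≤ (2 * p + 8) * Y :=
    calc (p + 4) * (27 * Z) = 27 * (p + 4) * Z := by ring
      _ ≤ (2 * p + 8) * (2 * (p + 6 + 1)) * Z := Nat.mul_le_mul_right _ (by nlinarith)
      _ ≤ (2 * p + 8) * Y := by rw [mul_assoc]; exact Nat.mul_le_mul_left _ h6
  linarith

theorem fnr_add_one (n r : ℕ) :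
    fnr n (r + 1) = ∑ k ∈ Ico 1 (n + 1), k ^ k * fnr (n - k) r := by
  simp only [fnr, mul_sum]
  rw [sum_sigma']
  refine sum_nbij' (fun i ↦ ⟨i 0, Fin.tail i⟩) (fun p ↦ Fin.cons p.1 p.2) ?_ ?_ ?_ ?_ ?_
  · intro i hi
    simp only [mem_filter, Nat.mem_antidiagonalTuple] at hi
    obtain ⟨hsum, hpos⟩ := hi
    rw [← Fin.cons_self_tail i, Fin.sum_cons] at hsum
    simp only [mem_sigma, mem_Ico, mem_filter, Nat.mem_antidiagonalTuple]
    exact ⟨⟨hpos 0, by omega⟩, by simp only [Fin.tail] at hsum ⊢; omega, fun j ↦ hpos j.succ⟩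
  · rintro ⟨k, t⟩ hkt
    simp only [mem_sigma, mem_Ico, mem_filter, Nat.mem_antidiagonalTuple] at hkt
    obtain ⟨⟨hk, hkn⟩, hsum, hpos⟩ := hkt
    simp only [mem_filter, Nat.mem_antidiagonalTuple, Fin.sum_cons, hsum]
    exact ⟨by omega, Fin.cases hk hpos⟩
  · intro i _
    simp
  · rintro ⟨k, t⟩ _
    simp
  · intro i _
    simp [Fin.prod_univ_succ, Fin.tail]

theorem fnr_zero_add_one (r : ℕ) : fnr 0 (r + 1) = 0 := by
  simp [fnr_add_one]

theorem fnr_one {m : ℕ} (hm : m ≠ 0) : fnr m 1 = m ^ m := by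
  rw [fnr, Nat.antidiagonalTuple_one, filter_singleton, if_pos fun j ↦ ?_]
  · simp
  · simpa using Nat.pos_of_ne_zero hm

theorem fnr_two (m : ℕ) : fnr m 2 = ∑ k ∈ Ico 1 m, k ^ k * (m - k) ^ (m - k) := by
  rcases m with _ | m
  · simp [fnr_add_one]
  rw [fnr_add_one, sum_Ico_succ_top (by omega), Nat.sub_self, fnr_zero_add_one, mul_zero,
    add_zero]
  refine sum_congr rfl fun k hk ↦ ?_
  rw [fnr_one (by simp at hk; omega)]

theorem fnr_succ_le_three_mul (n r : ℕ) : fnr (n + 1) (r + 2) ≤ 3 * fnr n (r + 1) := by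
  induction r generalizing n with
  | zero =>
    rcases eq_or_ne n 0 with rfl | hn
    · simp [fnr_two]
    · rw [fnr_one hn, fnr_two]
      exact sum_Ico_pow_self_mul_pow_self_le n
  | succ r ih =>
    rw [fnr_add_one, fnr_add_one, sum_Ico_succ_top (by omega), Nat.sub_self, fnr_zero_add_one,
      mul_zero, add_zero, mul_sum]
    refine sum_le_sum fun k hk ↦ ?_
    rw [show n + 1 - k = n - k + 1 by simp at hk; omega]
    calc k ^ k * fnr (n - k + 1) (r + 2) ≤ k ^ k * (3 * fnr (n - k) (r + 1)) :=
          Nat.mul_le_mul_left _ (ih _)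
      _ = 3 * (k ^ k * fnr (n - k) (r + 1)) := by ring

/-- For every `n ≥ 3`, `f(n, 3) < 6 (n-1)^{n-1}`. -/
theorem fnr_three_lt (n : ℕ) (hn : 3 ≤ n) : fnr n 3 < 6 * (n - 1) ^ (n - 1) := by
  obtain ⟨m, rfl⟩ := Nat.exists_eq_add_of_le' hn
  have hstep : 2 * (m + 2) * (m + 1) ^ (m + 1) ≤ (m + 2) ^ (m + 2) :=
    two_mul_succ_mul_pow_self_le (by omega)
  have hpos : 0 < (m + 1) ^ (m + 1) := Nat.pow_self_pos
  calc fnr (m + 3) 3 ≤ 3 * fnr (m + 2) 2 := fnr_succ_le_three_mul (m + 2) 1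
    _ ≤ 3 * (3 * fnr (m + 1) 1) := Nat.mul_le_mul_left _ (fnr_succ_le_three_mul (m + 1) 0)
    _ = 9 * (m + 1) ^ (m + 1) := by rw [fnr_one (by omega)]; ring
    _ < 6 * (m + 3 - 1) ^ (m + 3 - 1) := by
      rw [show m + 3 - 1 = m + 2 by omega]
      nlinarith
end
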